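/- arXiv:1909.12712 — 9 statements merged into one kernel-verified Lean document; each statement's English description precedes it below -/
import Mathlib

section
/- Let R be a semiprime ring, I a two-sided ideal of R, and c ∈ I an element that is regular in I (i.e., for all nonzero s ∈ I, cs ≠ 0 and sc ≠ 0). If M = ann_R(I) is the two-sided annihilator of I, then the left annihilator of c in R equals M and the right annihilator of c in R equals M. -/
/-!
If `r * c = 0` then `a * r ∈ I` is killed by `c` on the right for every `a ∈ I`, so regularity of
`c` gives `I * r = 0`; symmetrically `c * r = 0` gives `r * I = 0`. In a semiprime ring a one-sided
annihilator of an ideal is already two-sided: if `I * r = 0` then `(r a) x (r a) = r (a x r) a = 0`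
for `a ∈ I`, so `r a = 0`. Conversely `c ∈ I`, so the annihilator of `I` kills `c` on both sides.
-/

/-- A ring is semiprime if it has no nonzero element `a` with `a R a = 0`. -/
def IsSemiprimeRing (R : Type*) [Ring R] : Prop :=
  ∀ a : R, (∀ r : R, a * r * a = 0) → a = 0

/-- The left annihilator of a subset. -/
def leftAnn {R : Type*} [Ring R] (A : Set R) : Set R := {r | ∀ a ∈ A, r * a = 0}

/-- The right annihilator of a subset. -/
def rightAnn {R : Type*} [Ring R] (A : Set R) : Set R := {r | ∀ a ∈ A, a * r = 0}

/-- The two-sided annihilator of a subset. -/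
def twoAnn {R : Type*} [Ring R] (A : Set R) : Set R := leftAnn A ∩ rightAnn A

/-- `c` is regular in a subset `A`: multiplication by `c` kills no nonzero element of `A`. -/
def RegularIn {R : Type*} [Ring R] (c : R) (A : Set R) : Prop :=
  ∀ s ∈ A, s ≠ 0 → c * s ≠ 0 ∧ s * c ≠ 0

section Annihilators

variable {R : Type*} [Ring R]

theorem leftAnn_anti {A B : Set R} (h : A ⊆ B) : leftAnn B ⊆ leftAnn A :=
  fun _ hr a ha => hr a (h ha)

theorem rightAnn_anti {A B : Set R} (h : A ⊆ B) : rightAnn B ⊆ rightAnn A :=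
  fun _ hr a ha => hr a (h ha)

theorem mem_leftAnn_singleton {c r : R} : r ∈ leftAnn {c} ↔ r * c = 0 := by
  simp [leftAnn]

theorem mem_rightAnn_singleton {c r : R} : r ∈ rightAnn {c} ↔ c * r = 0 := by
  simp [rightAnn]

end Annihilators

namespace IsSemiprimeRing

variable {R : Type*} [Ring R] (hsp : IsSemiprimeRing R) (I : TwoSidedIdeal R)
include hsp

theorem rightAnn_subset_leftAnn : rightAnn (I : Set R) ⊆ leftAnn I := by
  intro r hr a ha
  refine hsp _ fun x => ?_
  calc r * a * x * (r * a) = r * (a * x * r) * a := by noncomm_ring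
    _ = 0 := by rw [hr _ (I.mul_mem_right a x ha), mul_zero, zero_mul]

theorem leftAnn_subset_rightAnn : leftAnn (I : Set R) ⊆ rightAnn I := by
  intro r hr a ha
  refine hsp _ fun x => ?_
  calc a * r * x * (a * r) = a * (r * (x * a)) * r := by noncomm_ring
    _ = 0 := by rw [hr _ (I.mul_mem_left x a ha), mul_zero, zero_mul]

theorem twoAnn_eq_leftAnn : twoAnn (I : Set R) = leftAnn I :=
  Set.inter_eq_left.mpr (hsp.leftAnn_subset_rightAnn I)

theorem twoAnn_eq_rightAnn : twoAnn (I : Set R) = rightAnn I :=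
  Set.inter_eq_right.mpr (hsp.rightAnn_subset_leftAnn I)

end IsSemiprimeRing

namespace RegularIn

variable {R : Type*} [Ring R] {I : TwoSidedIdeal R} {c : R}

theorem mem_rightAnn_of_mul_eq_zero (hreg : RegularIn c (I : Set R)) {r : R} (h : r * c = 0) :
    r ∈ rightAnn (I : Set R) := by
  intro a ha
  by_contra hne
  exact (hreg _ (I.mul_mem_right a r ha) hne).2 (by rw [mul_assoc, h, mul_zero])

theorem mem_leftAnn_of_mul_eq_zero (hreg : RegularIn c (I : Set R)) {r : R} (h : c * r = 0) :
    r ∈ leftAnn (I : Set R) := by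
  intro a ha
  by_contra hne
  exact (hreg _ (I.mul_mem_left r a ha) hne).1 (by rw [← mul_assoc, h, zero_mul])

end RegularIn

/-- in a semiprime ring, for `c ∈ I` regular in the two-sided ideal `I`,
the left and the right annihilator of `c` both equal `M = ann_R(I)`. -/
theorem stmt0 {R : Type*} [Ring R] (hsp : IsSemiprimeRing R)
    (I : TwoSidedIdeal R) (c : R) (hc : c ∈ I) (hreg : RegularIn c (I : Set R))
    (M : Set R) (hM : M = twoAnn (I : Set R)) :
    leftAnn {c} = M ∧ rightAnn {c} = M := by
  subst hM
  have hcI : {c} ⊆ (I : Set R) := Set.singleton_subset_iff.mpr hc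
  constructor
  · refine subset_antisymm (fun r hr => ?_) ?_
    · rw [hsp.twoAnn_eq_rightAnn]
      exact hreg.mem_rightAnn_of_mul_eq_zero (mem_leftAnn_singleton.mp hr)
    · rw [hsp.twoAnn_eq_leftAnn]
      exact leftAnn_anti hcI
  · refine subset_antisymm (fun r hr => ?_) ?_
    · rw [hsp.twoAnn_eq_leftAnn]
      exact hreg.mem_leftAnn_of_mul_eq_zero (mem_rightAnn_singleton.mp hr)
    · rw [hsp.twoAnn_eq_rightAnn]
      exact rightAnn_anti hcI
end

section
/- Let R be a semiprime ring, σ an automorphism of R, δ a σ-derivation of R, and I an ideal of R with σ(I) ⊆ I and such that δ(I)·I ⊆ I and σ(I)·δ(I) ⊆ I. Set M = ann_R(I) and suppose σ(M) = M. Then δ(M) ⊆ M. -/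
def IsSkewDerivation {R : Type*} [Ring R] (σ : R →+* R) (δ : R →+ R) : Prop :=
  ∀ a b : R, δ (a * b) = δ a * b + σ a * δ b

/-! For `a, b ∈ I` and `m ∈ M`, expanding `δ(bm) = 0` gives `σ(a)σ(b)δ(m) = -σ(a)δ(b)m = 0`,
so `σ(I)²δ(M) = 0`, and expanding `δ(m·ab) = 0` gives `δ(M)I² = 0`. Semiprimeness removes the
squares: `σ(I)δ(m) = 0 = δ(m)I`. Since `σ(I) ⊆ I`, the element `σ⁻¹(δ(m))` then annihilates `I`
on both sides, i.e. lies in `M`, and `σ(M) = M` gives `δ(m) ∈ M`. -/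

namespace IsSemiprimeRing

variable {R : Type*} [Ring R]

theorem mul_eq_zero_of_mul_mul_mul_eq_zero (hR : IsSemiprimeRing R) {a x : R}
    (h : ∀ r, a * r * a * x = 0) : a * x = 0 :=
  hR _ fun r => by simpa only [mul_assoc] using h (x * r)

theorem mul_eq_zero_of_mul_mul_mul_eq_zero' (hR : IsSemiprimeRing R) {a x : R}
    (h : ∀ r, x * a * r * a = 0) : x * a = 0 :=
  hR _ fun r => by simpa only [mul_assoc] using h (r * x)

end IsSemiprimeRing

namespace IsSkewDerivation

variable {R : Type*} [Ring R] {σ : R →+* R} {δ : R →+ R}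

theorem mul_add_mul_eq_zero (hδ : IsSkewDerivation σ δ) {a b : R} (h : a * b = 0) :
    δ a * b + σ a * δ b = 0 := by
  rw [← hδ, h, map_zero]

variable {I : TwoSidedIdeal R} {m : R}

theorem map_mul_map_mul_apply_eq_zero (hδ : IsSkewDerivation σ δ)
    (hσδI : ∀ a ∈ I, ∀ b ∈ I, σ a * δ b ∈ I) (hm : m ∈ rightAnn (I : Set R))
    {a b : R} (ha : a ∈ I) (hb : b ∈ I) : σ a * σ b * δ m = 0 := by
  have hbm : σ b * δ m = -(δ b * m) :=
    eq_neg_of_add_eq_zero_right (hδ.mul_add_mul_eq_zero (hm b hb))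
  rw [mul_assoc, hbm, mul_neg, ← mul_assoc, hm _ (hσδI a ha b hb), neg_zero]

theorem apply_mul_mul_eq_zero (hδ : IsSkewDerivation σ δ)
    (hδI : ∀ a ∈ I, ∀ b ∈ I, δ a * b ∈ I) (hσδI : ∀ a ∈ I, ∀ b ∈ I, σ a * δ b ∈ I)
    (hm : m ∈ leftAnn (I : Set R)) (hσm : σ m ∈ leftAnn (I : Set R))
    {a b : R} (ha : a ∈ I) (hb : b ∈ I) : δ m * (a * b) = 0 := by
  have h := hδ.mul_add_mul_eq_zero (hm _ (I.mul_mem_right a b ha))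
  rwa [hδ a b, mul_add, hσm _ (hδI a ha b hb), hσm _ (hσδI a ha b hb), add_zero,
    add_zero] at h

end IsSkewDerivation

theorem RingEquiv.symm_mem_twoAnn {R : Type*} [Ring R] (σ : R ≃+* R) {I : TwoSidedIdeal R}
    (hσI : ∀ a ∈ I, σ a ∈ I) {x : R} (hleft : ∀ a ∈ I, x * a = 0)
    (hright : ∀ a ∈ I, σ a * x = 0) : σ.symm x ∈ twoAnn (I : Set R) := by
  refine ⟨fun a ha => σ.injective ?_, fun a ha => σ.injective ?_⟩
  · rw [map_mul, σ.apply_symm_apply, map_zero, hleft _ (hσI a ha)]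
  · rw [map_mul, σ.apply_symm_apply, map_zero, hright a ha]

/-- if `σ(I) ⊆ I`, `δ(I)·I ⊆ I`, `σ(I)·δ(I) ⊆ I` and `σ(M) = M` for
`M = ann_R(I)`, then `δ(M) ⊆ M`. -/
theorem stmt3 {R : Type*} [Ring R] (hsp : IsSemiprimeRing R)
    (σ : R ≃+* R) (δ : R →+ R) (hδ : IsSkewDerivation (σ : R →+* R) δ)
    (I : TwoSidedIdeal R)
    (hσI : ∀ a ∈ I, σ a ∈ I)
    (hδI : ∀ a ∈ I, ∀ b ∈ I, δ a * b ∈ I)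
    (hσδI : ∀ a ∈ I, ∀ b ∈ I, σ a * δ b ∈ I)
    (M : Set R) (hM : M = twoAnn (I : Set R))
    (hσM : σ '' M = M) :
    ∀ m ∈ M, δ m ∈ M := by
  subst hM
  intro m hm
  have hσm : σ m ∈ twoAnn (I : Set R) := hσM ▸ Set.mem_image_of_mem σ hm
  have hleft : ∀ a ∈ I, δ m * a = 0 := fun a ha =>
    hsp.mul_eq_zero_of_mul_mul_mul_eq_zero' fun r => by
      rw [mul_assoc _ r, mul_assoc]
      exact hδ.apply_mul_mul_eq_zero hδI hσδI hm.1 hσm.1 ha (I.mul_mem_left r a ha)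
  have hright : ∀ a ∈ I, σ a * δ m = 0 := fun a ha =>
    hsp.mul_eq_zero_of_mul_mul_mul_eq_zero fun r => by
      rw [← σ.apply_symm_apply r, ← map_mul]
      exact hδ.map_mul_map_mul_apply_eq_zero hσδI hm.2 (I.mul_mem_right _ _ ha) ha
  rw [← hσM, ← σ.apply_symm_apply (δ m)]
  exact Set.mem_image_of_mem σ (σ.symm_mem_twoAnn hσI hleft hright)
end

section
/- Let R be a unital ring, X a set, and for each x ∈ X let σ_x be a ring endomorphism of R and δ_x a σ_x-derivation of R. Then there exists a ring S containing R as a subring and containing X, such that S is a free left R-module with basis the free monoid ⟨X⟩, and x·r = σ_x(r)·x + δ_x(r) for all x ∈ X and r ∈ R. -/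
universe u v

/-- `S` (together with the embedding `ι : R → S` and `j : X → S`) is a free skew extension
`R[X; 𝒢, 𝒟]`: it contains `R` via `ι`, satisfies the skew relations
`x·r = σₓ(r)·x + δₓ(r)`, and is a free left `R`-module with basis the free monoid on `X`
(every element has a unique representation as a finite left `R`-combination of monomials). -/
def IsFreeSkewExtension (R : Type*) [Ring R] (X : Type*) (σ : X → R →+* R)
    (δ : X → R →+ R) (S : Type*) [Ring S] (ι : R →+* S) (j : X → S) : Prop :=
  Function.Injective ι ∧
  (∀ (x : X) (r : R), j x * ι r = ι (σ x r) * j x + ι (δ x r)) ∧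
  ∀ s : S, ∃! c : FreeMonoid X →₀ R,
    s = c.sum fun w r => ι r * FreeMonoid.lift j w

/-!
`S` is realised inside the endomorphism ring of the additive group of `R⟨X⟩`, as the set of
operators `Σ r_w ŵ` where `r` acts by left multiplication and `ŵ = x̂₁ ⋯ x̂ₙ` for
`w = x₁ ⋯ xₙ`. Since `δₓ 1 = 0`, the operator `ŵ` sends `1` to `w`, so `Σ r_w ŵ` sends `1` to
`Σ r_w w`: the coefficients are recovered, which gives freeness. The skew relation
`x̂ r = σₓ(r) x̂ + δₓ(r)` is the σ-Leibniz rule, and it lets one move every `x̂` past the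
coefficients, so these operators form a subring.
-/

lemma AddMonoid.End.add_apply {M : Type*} [AddCommMonoid M] (f g : AddMonoid.End M) (m : M) :
    (f + g) m = f m + g m :=
  rfl

lemma IsSkewDerivation.map_one_eq_zero {R : Type*} [Ring R] {σ : R →+* R} {δ : R →+ R}
    (h : IsSkewDerivation σ δ) : δ 1 = 0 := by
  have h11 := h 1 1
  simp only [mul_one, map_one, one_mul] at h11
  exact right_eq_add.mp h11

namespace FreeSkewExtension

/-- The additive group of the monoid ring `R⟨X⟩`. -/
abbrev FreeMod (R : Type u) [Ring R] (X : Type v) : Type (max u v) := FreeMonoid X →₀ R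

variable {R : Type u} [Ring R] {X : Type v} (σ : X → R →+* R) (δ : X → R →+ R)

noncomputable def leftMul : R →+* AddMonoid.End (FreeMod R X) :=
  Module.toAddMonoidEnd R (FreeMod R X)

@[simp] lemma leftMul_single (r r' : R) (w : FreeMonoid X) :
    leftMul r (Finsupp.single w r') = Finsupp.single w (r * r') :=
  Finsupp.smul_single r w r'

noncomputable def skewVar (x : X) : AddMonoid.End (FreeMod R X) :=
  Finsupp.liftAddHom fun w =>
    (Finsupp.singleAddHom (FreeMonoid.of x * w)).comp (σ x).toAddMonoidHom +
      (Finsupp.singleAddHom w).comp (δ x)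

@[simp] lemma skewVar_single (x : X) (r : R) (w : FreeMonoid X) :
    skewVar σ δ x (Finsupp.single w r) =
      Finsupp.single (FreeMonoid.of x * w) (σ x r) + Finsupp.single w (δ x r) :=
  Finsupp.liftAddHom_apply_single _ w r

noncomputable def skewWord : FreeMonoid X →* AddMonoid.End (FreeMod R X) :=
  FreeMonoid.lift (skewVar σ δ)

@[simp] lemma skewWord_of (x : X) : skewWord σ δ (FreeMonoid.of x) = skewVar σ δ x :=
  FreeMonoid.lift_eval_of _ _

noncomputable def toEnd : FreeMod R X →+ AddMonoid.End (FreeMod R X) :=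
  Finsupp.liftAddHom fun w => (AddMonoidHom.mulRight (skewWord σ δ w)).comp leftMul.toAddMonoidHom

@[simp] lemma toEnd_single (w : FreeMonoid X) (r : R) :
    toEnd σ δ (Finsupp.single w r) = leftMul r * skewWord σ δ w := by
  simp [toEnd]

lemma leftMul_mul_toEnd (r : R) (c : FreeMod R X) :
    leftMul r * toEnd σ δ c = toEnd σ δ (r • c) := by
  induction c using Finsupp.induction with
  | zero => simp
  | single_add w r' f _ _ ih =>
      rw [smul_add, map_add, map_add, mul_add, ih, Finsupp.smul_single, smul_eq_mul,
        toEnd_single, toEnd_single, ← mul_assoc, ← map_mul]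

section Derivation

variable {σ δ} (hδ : ∀ x, IsSkewDerivation (σ x) (δ x))
include hδ

lemma skewWord_apply_single_one (w : FreeMonoid X) :
    skewWord σ δ w (Finsupp.single 1 1) = Finsupp.single w (1 : R) := by
  induction w using FreeMonoid.inductionOn' with
  | one => rfl
  | of_mul x w ih =>
      rw [map_mul, AddMonoid.End.coe_mul, Function.comp_apply, ih, skewWord_of, skewVar_single, map_one,
        (hδ x).map_one_eq_zero, Finsupp.single_zero, add_zero]

lemma toEnd_apply_single_one (c : FreeMod R X) : toEnd σ δ c (Finsupp.single 1 1) = c := by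
  induction c using Finsupp.induction with
  | zero => simp
  | single_add w r f _ _ ih =>
      rw [map_add, AddMonoid.End.add_apply, ih, toEnd_single,
        AddMonoid.End.coe_mul, Function.comp_apply, skewWord_apply_single_one hδ, leftMul_single, mul_one]

lemma toEnd_injective : Function.Injective (toEnd σ δ) := fun c c' h => by
  rw [← toEnd_apply_single_one hδ c, ← toEnd_apply_single_one hδ c', h]

lemma skewVar_mul_leftMul (x : X) (r : R) :
    skewVar σ δ x * leftMul r = leftMul (σ x r) * skewVar σ δ x + leftMul (δ x r) := by
  refine Finsupp.addHom_ext fun w r' => ?_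
  change skewVar σ δ x (leftMul r (Finsupp.single w r')) =
    leftMul (σ x r) (skewVar σ δ x (Finsupp.single w r')) + leftMul (δ x r) (Finsupp.single w r')
  rw [leftMul_single, skewVar_single, skewVar_single, map_add, leftMul_single, leftMul_single,
    leftMul_single, map_mul, hδ x r r', Finsupp.single_add]
  abel

lemma skewVar_mul_toEnd_mem_range (x : X) (c : FreeMod R X) :
    skewVar σ δ x * toEnd σ δ c ∈ (toEnd σ δ).range := by
  induction c using Finsupp.induction with
  | zero => simp
  | single_add w r f _ _ ih =>
      rw [map_add, mul_add]
      refine add_mem ⟨Finsupp.single (FreeMonoid.of x * w) (σ x r) + Finsupp.single w (δ x r),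
        ?_⟩ ih
      rw [toEnd_single, ← mul_assoc, skewVar_mul_leftMul hδ, map_add, toEnd_single,
        toEnd_single, add_mul, mul_assoc, map_mul, skewWord_of]

lemma skewWord_mul_toEnd_mem_range (w : FreeMonoid X) (c : FreeMod R X) :
    skewWord σ δ w * toEnd σ δ c ∈ (toEnd σ δ).range := by
  induction w using FreeMonoid.inductionOn' generalizing c with
  | one => exact ⟨c, by rw [map_one, one_mul]⟩
  | of_mul x w ih =>
      obtain ⟨d, hd⟩ := ih c
      rw [map_mul, mul_assoc, ← hd, skewWord_of]
      exact skewVar_mul_toEnd_mem_range hδ x d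

lemma toEnd_mul_toEnd_mem_range (c c' : FreeMod R X) :
    toEnd σ δ c * toEnd σ δ c' ∈ (toEnd σ δ).range := by
  induction c using Finsupp.induction with
  | zero => simp
  | single_add w r f _ _ ih =>
      rw [map_add, add_mul]
      refine add_mem ?_ ih
      obtain ⟨d, hd⟩ := skewWord_mul_toEnd_mem_range hδ w c'
      exact ⟨r • d, by rw [toEnd_single, mul_assoc, ← hd, leftMul_mul_toEnd]⟩

variable (σ δ)

/-- The ring `R[X; 𝒢, 𝒟]`, as the range of `toEnd`. -/
noncomputable def skewRing : Subring (AddMonoid.End (FreeMod R X)) where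
  carrier := Set.range (toEnd σ δ)
  zero_mem' := ⟨0, map_zero _⟩
  add_mem' := by rintro _ _ ⟨c, rfl⟩ ⟨c', rfl⟩; exact ⟨c + c', map_add _ _ _⟩
  neg_mem' := by rintro _ ⟨c, rfl⟩; exact ⟨-c, map_neg _ _⟩
  one_mem' := ⟨Finsupp.single 1 1, by rw [toEnd_single, map_one, map_one, one_mul]⟩
  mul_mem' := by
    rintro _ _ ⟨c, rfl⟩ ⟨c', rfl⟩
    exact toEnd_mul_toEnd_mem_range hδ c c'

lemma mem_skewRing {f : AddMonoid.End (FreeMod R X)} :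
    f ∈ skewRing σ δ hδ ↔ f ∈ (toEnd σ δ).range :=
  Iff.rfl

noncomputable def skewRing.ofCoeff : R →+* skewRing σ δ hδ :=
  leftMul.codRestrict _ fun r => ⟨Finsupp.single 1 r, by rw [toEnd_single, map_one, mul_one]⟩

@[simp] lemma skewRing.coe_ofCoeff (r : R) :
    (skewRing.ofCoeff σ δ hδ r : AddMonoid.End (FreeMod R X)) = leftMul r :=
  rfl

noncomputable def skewRing.var (x : X) : skewRing σ δ hδ :=
  ⟨skewVar σ δ x, Finsupp.single (FreeMonoid.of x) 1, by
    rw [toEnd_single, map_one, one_mul, skewWord_of]⟩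

lemma skewRing.coe_lift_var (w : FreeMonoid X) :
    (FreeMonoid.lift (skewRing.var σ δ hδ) w : AddMonoid.End (FreeMod R X)) = skewWord σ δ w := by
  rw [← Subring.coe_subtype, ← MonoidHom.coe_coe, ← MonoidHom.comp_apply]
  congr 1
  exact FreeMonoid.hom_eq fun x => by simp [skewRing.var]

lemma skewRing.coe_sum (c : FreeMod R X) :
    ((c.sum fun w r => skewRing.ofCoeff σ δ hδ r * FreeMonoid.lift (skewRing.var σ δ hδ) w :
      skewRing σ δ hδ) : AddMonoid.End (FreeMod R X)) = toEnd σ δ c := by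
  rw [← Subring.coe_subtype, map_finsuppSum]
  conv_rhs => rw [← Finsupp.sum_single c, map_finsuppSum]
  refine Finsupp.sum_congr fun w _ => ?_
  rw [map_mul, Subring.coe_subtype, coe_lift_var, toEnd_single]
  rfl

theorem isFreeSkewExtension :
    IsFreeSkewExtension R X σ δ (skewRing σ δ hδ) (skewRing.ofCoeff σ δ hδ)
      (skewRing.var σ δ hδ) := by
  refine ⟨fun r r' h => ?_, fun x r => Subtype.ext (skewVar_mul_leftMul hδ x r), fun s => ?_⟩
  · have h1 := congrArg (fun f : skewRing σ δ hδ => (f : AddMonoid.End (FreeMod R X))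
      (Finsupp.single 1 1)) h
    exact Finsupp.single_injective _ (by simpa using h1)
  · obtain ⟨c, hc⟩ := (mem_skewRing σ δ hδ).1 s.2
    refine ⟨c, Subtype.ext ?_, fun c' hc' => toEnd_injective hδ ?_⟩
    · rw [skewRing.coe_sum, hc]
    · rw [← skewRing.coe_sum, ← hc', hc]

end Derivation

end FreeSkewExtension

/-- free skew extensions exist: given endomorphisms `σₓ` and
`σₓ`-derivations `δₓ` of a unital ring `R`, there is a ring `S` containing `R` and `X`
which is a free left `R`-module on the free monoid `⟨X⟩` and satisfies
`x·r = σₓ(r)·x + δₓ(r)`. -/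
theorem stmt6 {R : Type u} [Ring R] {X : Type v} (σ : X → R →+* R) (δ : X → R →+ R)
    (hδ : ∀ x, IsSkewDerivation (σ x) (δ x)) :
    ∃ (S : Type (max u v)) (_ : Ring S) (ι : R →+* S) (j : X → S),
      IsFreeSkewExtension R X σ δ S ι j :=
  ⟨_, inferInstance, _, _, FreeSkewExtension.isFreeSkewExtension σ δ hδ⟩
end

section
/- Let S = R[X; 𝒢, 𝒟] be a free skew extension, T a ring, ψ: R → T a ring homomorphism, and φ: X → T a map satisfying φ(x)ψ(r) = ψ(σ_x(r))φ(x) + ψ(δ_x(r)) for all x ∈ X and r ∈ R. Then there exists a unique ring homomorphism ψ̄: S → T extending ψ and with ψ̄(x) = φ(x) for all x ∈ X. -/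
/-!
Freeness of `S` on the monomials `ι r * w` (`w` a word in `j`) leaves only one candidate: the
additive map sending `ι r * w(j)` to `ψ r * w(φ)`. Left multiplication by `ι r` or by `j x`
acts on coefficient vectors by the same formula in `S` and in `T` (the skew relations on both
sides), so the candidate intertwines left multiplication by every monomial and is therefore
multiplicative. A ring map is determined on monomials, which gives uniqueness.
-/

open Function

section MonomialSum

variable {R X S : Type*} [Ring R] [Ring S]

noncomputable def monomialSum (ι : R →+* S) (j : X → S) : (FreeMonoid X →₀ R) →+ S :=
  Finsupp.liftAddHom fun w =>
    (AddMonoidHom.mulRight (FreeMonoid.lift j w)).comp ι.toAddMonoidHom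

@[simp]
theorem monomialSum_single (ι : R →+* S) (j : X → S) (w : FreeMonoid X) (r : R) :
    monomialSum ι j (Finsupp.single w r) = ι r * FreeMonoid.lift j w :=
  Finsupp.liftAddHom_apply_single _ _ _

theorem monomialSum_smul (ι : R →+* S) (j : X → S) (r : R) (c : FreeMonoid X →₀ R) :
    monomialSum ι j (r • c) = ι r * monomialSum ι j c := by
  show ((monomialSum ι j).comp (smulAddHom R _ r)) c
    = ((AddMonoidHom.mulLeft (ι r)).comp (monomialSum ι j)) c
  congr 1
  refine Finsupp.addHom_ext fun w a => ?_
  simp only [AddMonoidHom.comp_apply, smulAddHom_apply, Finsupp.smul_single, smul_eq_mul,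
    monomialSum_single, AddMonoidHom.coe_mulLeft, map_mul, mul_assoc]

theorem map_monomialSum {T : Type*} [Ring T] (Ψ : S →+* T) (ι : R →+* S) (j : X → S)
    (c : FreeMonoid X →₀ R) : Ψ (monomialSum ι j c) = monomialSum (Ψ.comp ι) (Ψ ∘ j) c := by
  show ((Ψ.toAddMonoidHom).comp (monomialSum ι j)) c = monomialSum (Ψ.comp ι) (Ψ ∘ j) c
  congr 1
  refine Finsupp.addHom_ext fun w a => ?_
  simp only [AddMonoidHom.comp_apply, RingHom.toAddMonoidHom_eq_coe, AddMonoidHom.coe_coe,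
    monomialSum_single, map_mul, RingHom.coe_comp, comp_apply]
  exact congrArg _ (FreeMonoid.hom_map_lift (Ψ : S →* T) j w)

/-- Left multiplication by `x` on coefficient vectors, as dictated by `x r = σ(r) x + δ(r)`. -/
noncomputable def skewShift (σ : R →+* R) (δ : R →+ R) (x : X) :
    (FreeMonoid X →₀ R) →+ FreeMonoid X →₀ R :=
  (Finsupp.mapDomain.addMonoidHom (FreeMonoid.of x * ·)).comp
      (Finsupp.mapRange.addMonoidHom σ.toAddMonoidHom) +
    Finsupp.mapRange.addMonoidHom δ

theorem mul_monomialSum_of_commute {σ : R →+* R} {δ : R →+ R} {ι : R →+* S} {j : X → S} {x : X}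
    (hcomm : ∀ r, j x * ι r = ι (σ r) * j x + ι (δ r)) (c : FreeMonoid X →₀ R) :
    j x * monomialSum ι j c = monomialSum ι j (skewShift σ δ x c) := by
  show ((AddMonoidHom.mulLeft (j x)).comp (monomialSum ι j)) c
    = ((monomialSum ι j).comp (skewShift σ δ x)) c
  congr 1
  refine Finsupp.addHom_ext fun w r => ?_
  simp [skewShift, ← mul_assoc, hcomm, add_mul, FreeMonoid.lift_eval_of]

end MonomialSum

section Extension

variable {R X S T : Type*} [Ring R] [Ring S] [Ring T] {ι : R →+* S} {j : X → S}
  {ψ : R →+* T} {φ : X → T}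

theorem ringHom_ext_of_surjective_monomialSum (hsurj : Surjective (monomialSum ι j))
    {Ψ₁ Ψ₂ : S →+* T} (hι : Ψ₁.comp ι = Ψ₂.comp ι) (hj : ∀ x, Ψ₁ (j x) = Ψ₂ (j x)) :
    Ψ₁ = Ψ₂ := by
  ext s
  obtain ⟨c, rfl⟩ := hsurj s
  have hj' : Ψ₁ ∘ j = Ψ₂ ∘ j := funext hj
  rw [map_monomialSum, map_monomialSum, hι, hj']

theorem map_mul_of_map_monomialSum {σ : X → R →+* R} {δ : X → R →+ R}
    (hcommS : ∀ x r, j x * ι r = ι (σ x r) * j x + ι (δ x r))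
    (hcommT : ∀ x r, φ x * ψ r = ψ (σ x r) * φ x + ψ (δ x r))
    (hsurj : Surjective (monomialSum ι j)) (F : S →+ T)
    (hF : ∀ c, F (monomialSum ι j c) = monomialSum ψ φ c) (s t : S) :
    F (s * t) = F s * F t := by
  have map_ι_mul (r : R) (s : S) : F (ι r * s) = ψ r * F s := by
    obtain ⟨c, rfl⟩ := hsurj s
    rw [← monomialSum_smul, hF, hF, monomialSum_smul]
  have map_j_mul (x : X) (s : S) : F (j x * s) = φ x * F s := by
    obtain ⟨c, rfl⟩ := hsurj s
    rw [mul_monomialSum_of_commute (hcommS x), hF, hF, mul_monomialSum_of_commute (hcommT x)]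
  have map_lift_mul (w : FreeMonoid X) (s : S) :
      F (FreeMonoid.lift j w * s) = FreeMonoid.lift φ w * F s := by
    induction w using FreeMonoid.recOn generalizing s with
    | one => simp
    | of_mul x w ih =>
      simp only [map_mul, FreeMonoid.lift_eval_of, mul_assoc, map_j_mul, ih]
  obtain ⟨c, rfl⟩ := hsurj s
  show (F.comp ((AddMonoidHom.mulRight t).comp (monomialSum ι j))) c
    = ((AddMonoidHom.mulRight (F t)).comp (F.comp (monomialSum ι j))) c
  congr 1
  refine Finsupp.addHom_ext fun w r => ?_
  simp only [AddMonoidHom.comp_apply, AddMonoidHom.coe_mulRight, monomialSum_single]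
  rw [mul_assoc, map_ι_mul, map_lift_mul, ← monomialSum_single, hF, monomialSum_single, mul_assoc]

end Extension

namespace IsFreeSkewExtension

variable {R X S T : Type*} [Ring R] [Ring S] [Ring T] {σ : X → R →+* R} {δ : X → R →+ R}
  {ι : R →+* S} {j : X → S}

theorem bijective_monomialSum (hS : IsFreeSkewExtension R X σ δ S ι j) :
    Bijective (monomialSum ι j) :=
  ⟨fun _ _ h => (hS.2.2 _).unique rfl h, fun s => (hS.2.2 s).exists.imp fun _ h => h.symm⟩

noncomputable def liftAddHom (hS : IsFreeSkewExtension R X σ δ S ι j) (ψ : R →+* T)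
    (φ : X → T) : S →+ T :=
  (monomialSum ψ φ).comp (AddEquiv.ofBijective _ hS.bijective_monomialSum).symm.toAddMonoidHom

theorem liftAddHom_monomialSum (hS : IsFreeSkewExtension R X σ δ S ι j) (ψ : R →+* T)
    (φ : X → T) (c : FreeMonoid X →₀ R) :
    hS.liftAddHom ψ φ (monomialSum ι j c) = monomialSum ψ φ c :=
  congrArg (monomialSum ψ φ)
    ((AddEquiv.ofBijective _ hS.bijective_monomialSum).symm_apply_apply c)

noncomputable def lift (hS : IsFreeSkewExtension R X σ δ S ι j) (ψ : R →+* T) (φ : X → T)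
    (hrel : ∀ x r, φ x * ψ r = ψ (σ x r) * φ x + ψ (δ x r)) : S →+* T :=
  { hS.liftAddHom ψ φ with
    map_one' := by simpa using hS.liftAddHom_monomialSum ψ φ (Finsupp.single 1 1)
    map_mul' := map_mul_of_map_monomialSum hS.2.1 hrel hS.bijective_monomialSum.2 _
      (hS.liftAddHom_monomialSum ψ φ) }

theorem lift_comp (hS : IsFreeSkewExtension R X σ δ S ι j) (ψ : R →+* T) (φ : X → T)
    (hrel : ∀ x r, φ x * ψ r = ψ (σ x r) * φ x + ψ (δ x r)) :
    (hS.lift ψ φ hrel).comp ι = ψ := by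
  ext r
  show hS.liftAddHom ψ φ (ι r) = ψ r
  simpa using hS.liftAddHom_monomialSum ψ φ (Finsupp.single 1 r)

theorem lift_of (hS : IsFreeSkewExtension R X σ δ S ι j) (ψ : R →+* T) (φ : X → T)
    (hrel : ∀ x r, φ x * ψ r = ψ (σ x r) * φ x + ψ (δ x r)) (x : X) :
    hS.lift ψ φ hrel (j x) = φ x := by
  show hS.liftAddHom ψ φ (j x) = φ x
  simpa using hS.liftAddHom_monomialSum ψ φ (Finsupp.single (FreeMonoid.of x) 1)

end IsFreeSkewExtension

theorem stmt7_general {R : Type*} [Ring R] {X : Type*} (σ : X → R →+* R) (δ : X → R →+ R)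
    {S : Type*} [Ring S] (ι : R →+* S) (j : X → S)
    (hS : IsFreeSkewExtension R X σ δ S ι j)
    {T : Type*} [Ring T] (ψ : R →+* T) (φ : X → T)
    (hrel : ∀ (x : X) (r : R), φ x * ψ r = ψ (σ x r) * φ x + ψ (δ x r)) :
    ∃! Ψ : S →+* T, Ψ.comp ι = ψ ∧ ∀ x, Ψ (j x) = φ x :=
  ⟨hS.lift ψ φ hrel, ⟨hS.lift_comp ψ φ hrel, hS.lift_of ψ φ hrel⟩, fun _ ⟨hι, hj⟩ =>
    ringHom_ext_of_surjective_monomialSum hS.bijective_monomialSum.2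
      (hι.trans (hS.lift_comp ψ φ hrel).symm) fun x => (hj x).trans (hS.lift_of ψ φ hrel x).symm⟩

/-- universal mapping property of the free skew extension: a ring map
`ψ : R → T` together with `φ : X → T` satisfying the skew relations extends uniquely to a
ring homomorphism `S → T`. -/
theorem stmt7 {R : Type*} [Ring R] {X : Type*} (σ : X → R →+* R) (δ : X → R →+ R)
    (hδ : ∀ x, IsSkewDerivation (σ x) (δ x))
    {S : Type*} [Ring S] (ι : R →+* S) (j : X → S)
    (hS : IsFreeSkewExtension R X σ δ S ι j)
    {T : Type*} [Ring T] (ψ : R →+* T) (φ : X → T)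
    (hrel : ∀ (x : X) (r : R), φ x * ψ r = ψ (σ x r) * φ x + ψ (δ x r)) :
    ∃! Ψ : S →+* T, Ψ.comp ι = ψ ∧ ∀ x, Ψ (j x) = φ x :=
  stmt7_general σ δ ι j hS ψ φ hrel
end

section
/- Let S = R[X; 𝒢, 𝒟] be a free skew extension where X has at least two elements. Then S is not a left Goldie ring; specifically, for distinct x, y ∈ X, the sum of left ideals Σ_{n≥1} S·x·yⁿ is a direct sum of nonzero left ideals. -/
def AccLeftAnnihilators (R : Type*) [Ring R] : Prop :=
  ∀ f : ℕ → Set R, (∀ n, ∃ A : Set R, f n = leftAnn A) → (∀ n, f n ⊆ f (n + 1)) →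
    ∃ n, ∀ m, n ≤ m → f m = f n

/-- `R` contains no infinite direct sum of nonzero left ideals. -/
def NoInfiniteDirectSumOfLeftIdeals (R : Type*) [Ring R] : Prop :=
  ¬ ∃ f : ℕ → Ideal R, (∀ n, f n ≠ ⊥) ∧ iSupIndep f

/-- `R` is a left Goldie ring. -/
def IsLeftGoldie (R : Type*) [Ring R] : Prop :=
  NoInfiniteDirectSumOfLeftIdeals R ∧ AccLeftAnnihilators R


namespace FreeMonoid

variable {X : Type*}

theorem eq_of_mul_of_eq_mul_of {a b : FreeMonoid X} {x y : X} (h : a * of x = b * of y) :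
    x = y := by
  have := congrArg toList h
  simp only [toList_mul, toList_of] at this
  simpa using (List.append_inj' this rfl).2

theorem eq_of_mul_of_mul_pow_eq {x y : X} (hxy : x ≠ y) {u v : FreeMonoid X} {n m : ℕ}
    (h : u * (of x * of y ^ n) = v * (of x * of y ^ m)) : n = m := by
  wlog hnm : n ≤ m generalizing u v n m
  · exact (this h.symm (by omega)).symm
  obtain ⟨k, rfl⟩ := Nat.exists_eq_add_of_le' hnm
  rcases k with _ | k
  · exact (zero_add n).symm
  · have : u * of x = v * of x * of y ^ k * of y := by
      apply mul_right_cancel (b := of y ^ n)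
      simpa only [pow_add, pow_succ, mul_assoc] using h
    exact absurd (eq_of_mul_of_eq_mul_of this) hxy

theorem pairwise_disjoint_range_mul_of_mul_pow {x y : X} (hxy : x ≠ y) :
    Pairwise fun n m : ℕ ↦
      Disjoint (Set.range (· * (of x * of y ^ n))) (Set.range (· * (of x * of y ^ m))) := by
  intro n m hnm
  rw [Set.disjoint_left]
  rintro _ ⟨u, rfl⟩ ⟨v, huv⟩
  exact hnm (eq_of_mul_of_mul_pow_eq hxy huv.symm)

end FreeMonoid

theorem iSupIndep_of_support_subset {A N M R κ : Type*} [Ring A] [AddCommGroup N] [Module A N]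
    [AddCommMonoid R] (φ : N →+ (M →₀ R)) (hφ : Function.Injective φ) (I : κ → Submodule A N)
    (P : κ → Set M) (hP : Pairwise fun i j ↦ Disjoint (P i) (P j))
    (hI : ∀ i, ∀ z ∈ I i, ↑(φ z).support ⊆ P i) : iSupIndep I := by
  classical
  intro i
  rw [disjoint_iff_inf_le]
  rintro z ⟨hzi, hzo⟩
  have hadd (a b : N) (ha : ↑(φ a).support ⊆ (P i)ᶜ) (hb : ↑(φ b).support ⊆ (P i)ᶜ) :
      ↑(φ (a + b)).support ⊆ (P i)ᶜ := by
    grw [map_add, Finsupp.support_add, Finset.coe_union]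
    exact Set.union_subset ha hb
  have hsupport_compl : ↑(φ z).support ⊆ (P i)ᶜ :=
    Submodule.iSup_induction _ (motive := fun a ↦ ↑(φ a).support ⊆ (P i)ᶜ) hzo
      (fun j z hz ↦ Submodule.iSup_induction _ (motive := fun a ↦ ↑(φ a).support ⊆ (P i)ᶜ) hz
        (fun hji z hz ↦ (hI j z hz).trans (hP hji).subset_compl_right) (by simp) hadd)
      (by simp) hadd
  have hφz : φ z = 0 := by
    rw [← Finsupp.support_eq_empty, ← Finset.coe_eq_empty]
    exact Set.subset_empty_iff.mp fun v hv ↦ hsupport_compl hv (hI i z hzi hv)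
  exact (Submodule.mem_bot A).mpr (hφ (hφz.trans φ.map_zero.symm))

section LeftCombination

variable {R S M : Type*} [Ring R] [Ring S] [Monoid M] (ι : R →+* S) (f : M →* S)

noncomputable def leftCombination : (M →₀ R) →+ S :=
  Finsupp.liftAddHom fun w ↦ (AddMonoidHom.mulRight (f w)).comp ι.toAddMonoidHom

theorem leftCombination_apply (c : M →₀ R) :
    leftCombination ι f c = c.sum fun w r ↦ ι r * f w :=
  Finsupp.liftAddHom_apply _ _

theorem leftCombination_single (w : M) (r : R) :
    leftCombination ι f (Finsupp.single w r) = ι r * f w := by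
  simp [leftCombination]

theorem leftCombination_mapDomain_mul_right (c : M →₀ R) (w : M) :
    leftCombination ι f (c.mapDomain (· * w)) = leftCombination ι f c * f w := by
  simp only [leftCombination_apply, Finsupp.sum_mul, mul_assoc, ← map_mul]
  exact Finsupp.sum_mapDomain_index (by simp) (by simp [add_mul])

variable {ι f}

theorem map_ne_zero_of_leftCombination_injective [Nontrivial R]
    (h : Function.Injective (leftCombination ι f)) (w : M) : f w ≠ 0 := by
  rw [← one_mul (f w), ← map_one ι, ← leftCombination_single, ← map_zero (leftCombination ι f),
    h.ne_iff]
  exact Finsupp.single_ne_zero.mpr one_ne_zero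

theorem support_symm_mul_subset_range (h : Function.Bijective (leftCombination ι f))
    (s : S) (w : M) :
    ↑((AddEquiv.ofBijective _ h).symm (s * f w)).support ⊆ Set.range (· * w) := by
  classical
  set e := AddEquiv.ofBijective _ h
  have : e.symm (s * f w) = (e.symm s).mapDomain (· * w) := by
    rw [e.symm_apply_eq, AddEquiv.ofBijective_apply, leftCombination_mapDomain_mul_right]
    exact congrArg (· * f w) (e.apply_symm_apply s).symm
  rw [this]
  grw [Finsupp.mapDomain_support, Finset.coe_image]
  exact Set.image_subset_range _ _

end LeftCombination

theorem iSupIndep_span_singleton_of_bijective_leftCombination {R S M κ : Type*} [Ring R] [Ring S]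
    [Monoid M] {ι : R →+* S} {f : M →* S} (h : Function.Bijective (leftCombination ι f))
    (w : κ → M) (hw : Pairwise fun a b ↦ Disjoint (Set.range (· * w a)) (Set.range (· * w b))) :
    iSupIndep fun n ↦ (Ideal.span {f (w n)} : Ideal S) :=
  iSupIndep_of_support_subset (AddEquiv.ofBijective _ h).symm.toAddMonoidHom
    (AddEquiv.injective _) _ _ hw fun n z hz ↦ by
      obtain ⟨s, rfl⟩ := Ideal.mem_span_singleton'.mp hz
      exact support_symm_mul_subset_range h s (w n)

theorem stmt9_general {R : Type*} [Ring R] [Nontrivial R] {X : Type*}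
    (σ : X → R →+* R) (δ : X → R →+ R)
    {S : Type*} [Ring S] (ι : R →+* S) (j : X → S)
    (hS : IsFreeSkewExtension R X σ δ S ι j)
    (x y : X) (hxy : x ≠ y) :
    (∀ n : ℕ, (Ideal.span {j x * j y ^ (n + 1)} : Ideal S) ≠ ⊥) ∧
    iSupIndep (fun n : ℕ => (Ideal.span {j x * j y ^ (n + 1)} : Ideal S)) ∧
    ¬ IsLeftGoldie S := by
  obtain ⟨-, -, hunique⟩ := hS
  have hbasis : Function.Bijective (leftCombination ι (FreeMonoid.lift j)) :=
    Function.bijective_iff_existsUnique _ |>.mpr fun s ↦ by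
      simpa only [leftCombination_apply, eq_comm] using hunique s
  have hgen (n : ℕ) : j x * j y ^ (n + 1) =
      FreeMonoid.lift j (FreeMonoid.of x * FreeMonoid.of y ^ (n + 1)) := by
    simp
  simp only [hgen]
  have hne (n : ℕ) : (Ideal.span {FreeMonoid.lift j
      (FreeMonoid.of x * FreeMonoid.of y ^ (n + 1))} : Ideal S) ≠ ⊥ := by
    rw [Ne, Ideal.span_singleton_eq_bot]
    exact map_ne_zero_of_leftCombination_injective hbasis.1 _
  have hind := iSupIndep_span_singleton_of_bijective_leftCombination hbasis _
    ((FreeMonoid.pairwise_disjoint_range_mul_of_mul_pow hxy).comp_of_injective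
      (add_left_injective 1))
  exact ⟨hne, hind, fun hgoldie ↦ hgoldie.1 ⟨_, hne, hind⟩⟩

/-- if `X` has two distinct elements `x ≠ y`, the free skew extension
`S = R[X; 𝒢, 𝒟]` (with the `σ` automorphisms) is not left Goldie: the left ideals
`S·x·yⁿ`, `n ≥ 1`, are nonzero and form an infinite direct sum. -/
theorem stmt9 {R : Type*} [Ring R] [Nontrivial R] {X : Type*}
    (σ : X → R →+* R) (hσ : ∀ x, Function.Bijective (σ x)) (δ : X → R →+ R)
    (hδ : ∀ x, IsSkewDerivation (σ x) (δ x))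
    {S : Type*} [Ring S] (ι : R →+* S) (j : X → S)
    (hS : IsFreeSkewExtension R X σ δ S ι j)
    (x y : X) (hxy : x ≠ y) :
    (∀ n : ℕ, (Ideal.span {j x * j y ^ (n + 1)} : Ideal S) ≠ ⊥) ∧
    iSupIndep (fun n : ℕ => (Ideal.span {j x * j y ^ (n + 1)} : Ideal S)) ∧
    ¬ IsLeftGoldie S :=
  stmt9_general σ δ ι j hS x y hxy
end

section
/- With the notation of the preceding setup (A a nonzero ideal of R[X; 𝒢, 𝒟], I the ideal of R generated additively by leading coefficients of elements of A, all σ_x automorphisms), one has σ_x(I) ⊆ I for every x ∈ X. -/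
/-- The set of leading coefficients (w.r.t. the order on monomials) of the nonzero
elements of a subset `A` of the free skew extension. -/
def LeadingCoeffSet {R : Type*} [Ring R] {X : Type*} [LinearOrder (FreeMonoid X)]
    {S : Type*} [Ring S] (ι : R →+* S) (j : X → S) (A : Set S) : Set R :=
  {r | ∃ s ∈ A, ∃ c : FreeMonoid X →₀ R,
    s = c.sum (fun w a => ι a * FreeMonoid.lift j w) ∧
    ∃ w ∈ c.support, (∀ v ∈ c.support, v ≤ w) ∧ r = c w}

/-!
If `s ∈ A` has leading term `a·w`, then `x s ∈ A` and, by `x r = σₓ(r) x + δₓ(r)`, its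
coefficients are `σₓ` of those of `s` shifted to `x v`, plus `δₓ` of them at the old monomials.
Since the order refines degree and is compatible with left multiplication, `x w` is the leading
monomial of `x s`, with coefficient `σₓ(a) ≠ 0`. So `σₓ` maps the generators of `I` into
themselves, hence `I` into itself.
-/

namespace FreeSkewExtension

open Finsupp

variable {R : Type*} [Ring R] {X : Type*}

noncomputable def leftMulCoeffs (x : X) (σ : R →+* R) (δ : R →+ R) (c : FreeMonoid X →₀ R) :
    FreeMonoid X →₀ R :=
  mapDomain (FreeMonoid.of x * ·) (c.mapRange σ (map_zero σ)) + c.mapRange δ (map_zero δ)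

theorem mul_sum_eq_sum_leftMulCoeffs {S : Type*} [Ring S] (ι : R →+* S) (j : X → S) (x : X)
    (σ : R →+* R) (δ : R →+ R) (hrel : ∀ r, j x * ι r = ι (σ r) * j x + ι (δ r))
    (c : FreeMonoid X →₀ R) :
    j x * c.sum (fun w a => ι a * FreeMonoid.lift j w) =
      (leftMulCoeffs x σ δ c).sum (fun w a => ι a * FreeMonoid.lift j w) := by
  rw [leftMulCoeffs, Finsupp.mul_sum,
    sum_add_index' (by simp) (fun _ _ _ => by rw [map_add, add_mul]),
    sum_mapDomain_index (by simp) (fun _ _ _ => by rw [map_add, add_mul]),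
    sum_mapRange_index (by simp), sum_mapRange_index (by simp), Finsupp.sum, Finsupp.sum,
    Finsupp.sum, ← Finset.sum_add_distrib]
  refine Finset.sum_congr rfl fun u _ => ?_
  rw [map_mul, FreeMonoid.lift_eval_of, ← mul_assoc, ← mul_assoc, hrel, add_mul, mul_assoc]

variable [LinearOrder (FreeMonoid X)]
  (hdeg : ∀ v w : FreeMonoid X, FreeMonoid.length v < FreeMonoid.length w → v < w)
include hdeg

theorem length_le_of_isGreatest_support {c : FreeMonoid X →₀ R} {w : FreeMonoid X}
    (hw : IsGreatest (c.support : Set (FreeMonoid X)) w) {v : FreeMonoid X} (hv : v ∈ c.support) :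
    FreeMonoid.length v ≤ FreeMonoid.length w :=
  not_lt.mp fun hlt => (hdeg w v hlt).not_ge (hw.2 hv)

theorem leftMulCoeffs_of_mul_of_isGreatest {x : X} {σ : R →+* R} {δ : R →+ R}
    {c : FreeMonoid X →₀ R} {w : FreeMonoid X} (hw : IsGreatest (c.support : Set _) w) :
    leftMulCoeffs x σ δ c (FreeMonoid.of x * w) = σ (c w) := by
  have hlen := length_le_of_isGreatest_support hdeg hw (v := FreeMonoid.of x * w)
  simp only [FreeMonoid.length_mul, FreeMonoid.length_of] at hlen
  have hc : c (FreeMonoid.of x * w) = 0 := notMem_support_iff.mp fun h => by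
    have := hlen h; omega
  rw [leftMulCoeffs, Finsupp.add_apply, mapDomain_apply (mul_right_injective _), mapRange_apply,
    mapRange_apply, hc, map_zero, add_zero]

theorem isGreatest_support_leftMulCoeffs
    (hmul : ∀ u v w : FreeMonoid X, v < w → u * v < u * w) {x : X} {σ : R →+* R}
    (hσ : Function.Injective σ) (δ : R →+ R) {c : FreeMonoid X →₀ R} {w : FreeMonoid X}
    (hw : IsGreatest (c.support : Set _) w) :
    IsGreatest ((leftMulCoeffs x σ δ c).support : Set _) (FreeMonoid.of x * w) := by
  classical
  refine ⟨?_, fun v hv => ?_⟩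
  · rw [Finset.mem_coe, mem_support_iff, leftMulCoeffs_of_mul_of_isGreatest hdeg hw,
      hσ.ne_iff' (map_zero σ)]
    exact mem_support_iff.mp hw.1
  rcases Finset.mem_union.mp (support_add hv) with hv | hv
  · obtain ⟨u, hu, rfl⟩ := Finset.mem_image.mp (mapDomain_support hv)
    rcases (hw.2 (support_mapRange hu)).lt_or_eq with hlt | rfl
    · exact (hmul _ _ _ hlt).le
    · exact le_rfl
  · refine (hdeg _ _ ?_).le
    have := length_le_of_isGreatest_support hdeg hw (support_mapRange hv)
    simp only [FreeMonoid.length_mul, FreeMonoid.length_of]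
    omega

theorem mapsTo_leadingCoeffSet {S : Type*} [Ring S] (ι : R →+* S) (j : X → S)
    (hmul : ∀ u v w : FreeMonoid X, v < w → u * v < u * w) (x : X) {σ : R →+* R}
    (hσ : Function.Injective σ) (δ : R →+ R) (hrel : ∀ r, j x * ι r = ι (σ r) * j x + ι (δ r))
    {A : Set S} (hA : ∀ s ∈ A, j x * s ∈ A) :
    Set.MapsTo σ (LeadingCoeffSet ι j A) (LeadingCoeffSet ι j A) := by
  rintro _ ⟨s, hs, c, rfl, w, hw, hmax, rfl⟩
  have hlead : IsGreatest (c.support : Set _) w := ⟨hw, fun v hv => hmax v hv⟩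
  have hlead' := isGreatest_support_leftMulCoeffs hdeg hmul hσ δ (x := x) hlead
  exact ⟨_, hA _ hs, leftMulCoeffs x σ δ c, mul_sum_eq_sum_leftMulCoeffs ι j x σ δ hrel c,
    _, hlead'.1, fun v hv => hlead'.2 hv, (leftMulCoeffs_of_mul_of_isGreatest hdeg hlead).symm⟩

end FreeSkewExtension

theorem AddSubgroup.mapsTo_closure {G : Type*} [AddGroup G] {f : G →+ G} {s : Set G}
    (hf : Set.MapsTo f s s) : Set.MapsTo f (closure s) (closure s) := fun _ hr => by
  have := mem_map_of_mem f hr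
  rw [AddMonoidHom.map_closure] at this
  exact closure_mono hf.image_subset this

theorem stmt11_general {R : Type*} [Ring R] {X : Type*} [LinearOrder (FreeMonoid X)]
    (hdeg : ∀ v w : FreeMonoid X, FreeMonoid.length v < FreeMonoid.length w → v < w)
    (hmul : ∀ u v w : FreeMonoid X, v < w → u * v < u * w ∧ v * u < w * u)
    (σ : X → R →+* R) (hσ : ∀ x, Function.Bijective (σ x)) (δ : X → R →+ R)
    {S : Type*} [Ring S] (ι : R →+* S) (j : X → S)
    (hS : IsFreeSkewExtension R X σ δ S ι j)
    (A : TwoSidedIdeal S)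
    (I : AddSubgroup R) (hI : I = AddSubgroup.closure (LeadingCoeffSet ι j (A : Set S))) :
    ∀ r ∈ I, ∀ x : X, σ x r ∈ I := by
  subst hI
  intro r hr x
  have hmaps : Set.MapsTo (σ x) (LeadingCoeffSet ι j (A : Set S)) (LeadingCoeffSet ι j A) :=
    FreeSkewExtension.mapsTo_leadingCoeffSet hdeg ι j (fun u v w h => (hmul u v w h).1) x
      (hσ x).1 (δ x) (hS.2.1 x) (fun s hs => A.mul_mem_left _ _ hs)
  exact AddSubgroup.mapsTo_closure (f := (σ x).toAddMonoidHom) hmaps hr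

/-- with `A` a nonzero two-sided ideal of the free skew extension
`S = R[X; 𝒢, 𝒟]` (all `σₓ` automorphisms) and `I` the additive subgroup of `R` generated
by the leading coefficients of elements of `A` (w.r.t. a degree-refining monomial order),
one has `σₓ(I) ⊆ I` for every `x ∈ X`. -/
theorem stmt11 {R : Type*} [Ring R] {X : Type*} [LinearOrder (FreeMonoid X)]
    (hdeg : ∀ v w : FreeMonoid X, FreeMonoid.length v < FreeMonoid.length w → v < w)
    (hmul : ∀ u v w : FreeMonoid X, v < w → u * v < u * w ∧ v * u < w * u)
    (σ : X → R →+* R) (hσ : ∀ x, Function.Bijective (σ x)) (δ : X → R →+ R)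
    (hδ : ∀ x, IsSkewDerivation (σ x) (δ x))
    {S : Type*} [Ring S] (ι : R →+* S) (j : X → S)
    (hS : IsFreeSkewExtension R X σ δ S ι j)
    (A : TwoSidedIdeal S) (hA : A ≠ ⊥)
    (I : AddSubgroup R) (hI : I = AddSubgroup.closure (LeadingCoeffSet ι j (A : Set S))) :
    ∀ r ∈ I, ∀ x : X, σ x r ∈ I :=
  stmt11_general hdeg hmul σ hσ δ ι j hS A I hI
end

section
/- Let R be an algebra over a field F, σ an automorphism and δ a σ-derivation with δσ = qσδ for some nonzero q ∈ F (a q-skew σ-derivation), and let I be a σ-stable ideal. Then for all a₁, …, a_n ∈ I, δⁿ(a₁a₂⋯a_n) = (n!)_q · σ^{n−1}δ(a₁) σ^{n−2}δ(a₂) ⋯ σδ(a_{n−1}) δ(a_n) + w for some w ∈ I, where (n!)_q = ∏_{i=1}^n (1 + q + ⋯ + q^{i−1}). -/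
/-- The `q`-factorial `(n!)_q = ∏_{i=1}^{n} (1 + q + ⋯ + q^{i-1})`. -/
def qFactorial {F : Type*} [Field F] (q : F) (n : ℕ) : F :=
  ∏ i ∈ Finset.range n, ∑ k ∈ Finset.range (i + 1), q ^ k

/-!
Write `a₁ ⋯ aₙ = x y` with `x = a₁`. Iterating the skew Leibniz rule gives
`δ^{k+1}(xy) = σ^{k+1}(x) δ^{k+1}(y) + (∑_{i ≤ k} σ^{k-i} δ σ^i x) δ^k(y) + ∑_{j < k} r_j δ^j(y)`.
If `x ∈ I` and `δ^j(y) ∈ I` for `j < k` (true when `y` is a product of more than `k` elements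
of `I`), only the middle term survives modulo `I`. The relation `δσ = qσδ` turns `δ σ^i x` into
`q^i σ^i δ x` modulo `I`, so the middle coefficient is `[k+1]_q σ^k δ x`, and induction on `n`
assembles the `q`-factorial.

The subtle point is that `σ` need not fix the scalars: `σ (algebraMap q)` may differ from
`algebraMap q`. But for central `z` and `a ∈ I`, comparing `δ(za)` with `δ(az)` shows
`(σ z - z) δ a ∈ I`, so modulo `I` every `σ^j (algebraMap q)` acts on `σ^m δ a` as `q` does.
-/

open Finset

theorem TwoSidedIdeal.algebra_smul_mem {F R : Type*} [CommSemiring F] [Ring R] [Algebra F R]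
    (I : TwoSidedIdeal R) (c : F) {x : R} (hx : x ∈ I) : c • x ∈ I := by
  rw [Algebra.smul_def]
  exact I.mul_mem_left _ _ hx

namespace IsSkewDerivation

section RingHom

variable {R : Type*} [Ring R] {σ : R →+* R} {δ : R →+ R}

theorem apply_mem_span_iterate (hδ : IsSkewDerivation σ δ) {y w : R} {k : ℕ}
    (hw : w ∈ Ideal.span ((δ^[·] y) '' Set.Iio k)) :
    δ w ∈ Ideal.span ((δ^[·] y) '' Set.Iio (k + 1)) := by
  have hmono :
      Ideal.span ((δ^[·] y) '' Set.Iio k) ≤ Ideal.span ((δ^[·] y) '' Set.Iio (k + 1)) :=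
    Ideal.span_mono (Set.image_mono (Set.Iio_subset_Iio k.le_succ))
  induction hw using Submodule.span_induction with
  | mem _ hw =>
    obtain ⟨j, hj, rfl⟩ := hw
    exact Ideal.subset_span ⟨j + 1, Nat.succ_lt_succ hj, Function.iterate_succ_apply' _ _ _⟩
  | zero => simp
  | add _ _ _ _ hv hw => rw [map_add]; exact add_mem hv hw
  | smul r w hw ih =>
    rw [smul_eq_mul, hδ]
    exact add_mem (Ideal.mul_mem_left _ _ (hmono hw)) (Ideal.mul_mem_left _ _ ih)

theorem iterate_succ_apply_mul_sub_mem_span (hδ : IsSkewDerivation σ δ) (x y : R) (k : ℕ) :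
    δ^[k + 1] (x * y) - σ^[k + 1] x * δ^[k + 1] y
        - (∑ i ∈ range (k + 1), σ^[k - i] (δ (σ^[i] x))) * δ^[k] y
      ∈ Ideal.span ((δ^[·] y) '' Set.Iio k) := by
  induction k with
  | zero => simp [hδ x y]
  | succ k ih =>
    set S := ∑ i ∈ range (k + 1), σ^[k - i] (δ (σ^[i] x))
    set e := δ^[k + 1] (x * y) - σ^[k + 1] x * δ^[k + 1] y - S * δ^[k] y
    have hS : ∑ i ∈ range (k + 1 + 1), σ^[k + 1 - i] (δ (σ^[i] x)) = δ (σ^[k + 1] x) + σ S := by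
      rw [sum_range_succ, Nat.sub_self, Function.iterate_zero_apply, add_comm, map_sum]
      refine congrArg _ (sum_congr rfl fun i hi => ?_)
      rw [← Function.iterate_succ_apply' σ, Nat.succ_sub (mem_range_succ_iff.1 hi)]
    have hexp : δ^[k + 1 + 1] (x * y) - σ^[k + 1 + 1] x * δ^[k + 1 + 1] y
        - (δ (σ^[k + 1] x) + σ S) * δ^[k + 1] y = δ e + δ S * δ^[k] y := by
      have he : δ^[k + 1] (x * y) = e + σ^[k + 1] x * δ^[k + 1] y + S * δ^[k] y := by
        simp only [e]; abel
      rw [Function.iterate_succ_apply' δ (k + 1) (x * y), he, map_add, map_add, hδ, hδ]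
      simp only [Function.iterate_succ_apply']
      rw [add_mul]; abel
    rw [hS, hexp]
    exact add_mem (hδ.apply_mem_span_iterate ih)
      (Ideal.mul_mem_left _ _ (Ideal.subset_span ⟨k, k.lt_succ_self, rfl⟩))

variable {I : TwoSidedIdeal R}

theorem iterate_succ_apply_mul_sub_mem (hδ : IsSkewDerivation σ δ) (hσI : ∀ a ∈ I, σ a ∈ I)
    {x y : R} (hx : x ∈ I) {k : ℕ} (hy : ∀ j < k, δ^[j] y ∈ I) :
    δ^[k + 1] (x * y) - (∑ i ∈ range (k + 1), σ^[k - i] (δ (σ^[i] x))) * δ^[k] y ∈ I := by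
  have hspan : Ideal.span ((δ^[·] y) '' Set.Iio k) ≤ I.asIdeal :=
    Ideal.span_le.2 (by rintro _ ⟨j, hj, rfl⟩; exact hy j hj)
  have hfirst : σ^[k + 1] x * δ^[k + 1] y ∈ I :=
    I.mul_mem_right _ _ (Set.MapsTo.iterate (fun a ha => hσI a ha) (k + 1) hx)
  have hrest := TwoSidedIdeal.mem_asIdeal.1 (hspan (hδ.iterate_succ_apply_mul_sub_mem_span x y k))
  convert add_mem hrest hfirst using 1
  abel

theorem iterate_apply_list_prod_mem (hδ : IsSkewDerivation σ δ) (hσI : ∀ a ∈ I, σ a ∈ I)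
    (l : List R) (hl : ∀ x ∈ l, x ∈ I) {j : ℕ} (hj : j < l.length) : δ^[j] l.prod ∈ I := by
  induction l generalizing j with
  | nil => simp at hj
  | cons x l ih =>
    have hx : x ∈ I := hl x List.mem_cons_self
    rw [List.prod_cons]
    cases j with
    | zero => exact I.mul_mem_right _ _ hx
    | succ k =>
      have hy : ∀ i < l.length, δ^[i] l.prod ∈ I := fun i hi =>
        ih (fun y hy => hl y (List.mem_cons_of_mem x hy)) hi
      have hk : k < l.length := by simpa using hj
      simpa only [sub_add_cancel] using
        add_mem (hδ.iterate_succ_apply_mul_sub_mem hσI hx fun i hi => hy i (hi.trans hk))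
          (I.mul_mem_left (∑ i ∈ range (k + 1), σ^[k - i] (δ (σ^[i] x))) _ (hy k hk))

end RingHom

section RingEquiv

variable {R : Type*} [Ring R] {σ : R ≃+* R} {δ : R →+ R} {I : TwoSidedIdeal R}

theorem apply_mul (hδ : IsSkewDerivation (σ : R →+* R) δ) (a b : R) :
    δ (a * b) = δ a * b + σ a * δ b :=
  hδ a b

theorem sub_mul_iterate_apply_mem (hδ : IsSkewDerivation (σ : R →+* R) δ)
    (hσI : ∀ a ∈ I, σ a ∈ I) {a : R} (ha : a ∈ I) (m : ℕ) {z : R} (hz : ∀ r, Commute z r) :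
    (σ z - z) * σ^[m] (δ a) ∈ I := by
  induction m generalizing z with
  | zero =>
    have hza : δ z * a + σ z * δ a = δ a * z + σ a * δ z := by
      rw [← hδ.apply_mul, ← hδ.apply_mul, (hz a).eq]
    have h : (σ z - z) * δ a = σ a * δ z - δ z * a := by
      rw [sub_mul, (hz (δ a)).eq, sub_eq_sub_iff_add_eq_add, add_comm, hza, add_comm]
    rw [Function.iterate_zero_apply, h]
    exact sub_mem (I.mul_mem_right _ _ (hσI a ha)) (I.mul_mem_left _ _ ha)
  | succ m ih =>
    have hz' : ∀ r, Commute (σ.symm z) r := fun r => by simpa using (hz (σ r)).map σ.symm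
    have h : (σ z - z) * σ^[m + 1] (δ a) = σ ((σ (σ.symm z) - σ.symm z) * σ^[m] (δ a)) := by
      rw [map_mul, map_sub, Function.iterate_succ_apply', RingEquiv.apply_symm_apply]
    rw [h]
    exact hσI _ (ih hz')

theorem iterate_sub_mul_iterate_apply_mem (hδ : IsSkewDerivation (σ : R →+* R) δ)
    (hσI : ∀ a ∈ I, σ a ∈ I) {a : R} (ha : a ∈ I) (j m : ℕ) {z : R} (hz : ∀ r, Commute z r) :
    (σ^[j] z - z) * σ^[m] (δ a) ∈ I := by
  induction j generalizing z with
  | zero => simp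
  | succ j ih =>
    have hσz : ∀ r, Commute (σ z) r := fun r => by simpa using (hz (σ.symm r)).map σ
    rw [Function.iterate_succ_apply, ← sub_add_sub_cancel _ (σ z), add_mul]
    exact add_mem (ih hσz) (hδ.sub_mul_iterate_apply_mem hσI ha m hz)

section Algebra

variable {F : Type*} [CommSemiring F] [Algebra F R] {q : F}

theorem iterate_apply_iterate_sub_smul_mem (hδ : IsSkewDerivation (σ : R →+* R) δ)
    (hσI : ∀ a ∈ I, σ a ∈ I) (hqskew : ∀ r, δ (σ r) = q • σ (δ r)) {a : R} (ha : a ∈ I)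
    (i k : ℕ) : σ^[k] (δ (σ^[i] a)) - q ^ i • σ^[k + i] (δ a) ∈ I := by
  induction i generalizing k with
  | zero => simp
  | succ i ih =>
    set c := σ^[k] (algebraMap F R q)
    set T := σ^[k + 1 + i] (δ a)
    set W := σ^[k + 1] (δ (σ^[i] a))
    have hc : c * T - q • T ∈ I := by
      rw [Algebra.smul_def, ← sub_mul]
      exact hδ.iterate_sub_mul_iterate_apply_mem hσI ha k _ (Algebra.commutes q)
    have hW : σ^[k] (δ (σ^[i + 1] a)) = c * W := by
      rw [Function.iterate_succ_apply', hqskew, Algebra.smul_def, iterate_map_mul,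
        ← Function.iterate_succ_apply σ k]
    have h : σ^[k] (δ (σ^[i + 1] a)) - q ^ (i + 1) • σ^[k + (i + 1)] (δ a)
        = c * (W - q ^ i • T) + q ^ i • (c * T - q • T) := by
      rw [hW, show k + (i + 1) = k + 1 + i by omega, mul_sub, mul_smul_comm, smul_sub, smul_smul,
        ← pow_succ]
      abel
    rw [h]
    exact add_mem (I.mul_mem_left _ _ (ih (k + 1))) (I.algebra_smul_mem _ hc)

theorem sum_iterate_apply_iterate_sub_smul_mem (hδ : IsSkewDerivation (σ : R →+* R) δ)
    (hσI : ∀ a ∈ I, σ a ∈ I) (hqskew : ∀ r, δ (σ r) = q • σ (δ r)) {x : R} (hx : x ∈ I)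
    (k : ℕ) :
    ∑ i ∈ range (k + 1), σ^[k - i] (δ (σ^[i] x)) - (∑ i ∈ range (k + 1), q ^ i) • σ^[k] (δ x)
      ∈ I := by
  rw [sum_smul, ← sum_sub_distrib]
  refine sum_mem fun i hi => ?_
  simpa only [Nat.sub_add_cancel (mem_range_succ_iff.1 hi)] using
    hδ.iterate_apply_iterate_sub_smul_mem hσI hqskew hx i (k - i)

theorem iterate_succ_apply_mul_sub_smul_mem (hδ : IsSkewDerivation (σ : R →+* R) δ)
    (hσI : ∀ a ∈ I, σ a ∈ I) (hqskew : ∀ r, δ (σ r) = q • σ (δ r)) {x y : R} (hx : x ∈ I)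
    {k : ℕ} (hy : ∀ j < k, δ^[j] y ∈ I) :
    δ^[k + 1] (x * y) - (∑ i ∈ range (k + 1), q ^ i) • (σ^[k] (δ x) * δ^[k] y) ∈ I := by
  have h := hδ.iterate_succ_apply_mul_sub_mem hσI hx hy
  simp only [RingEquiv.coe_toRingHom] at h
  have hsum := hδ.sum_iterate_apply_iterate_sub_smul_mem hσI hqskew hx k
  convert add_mem h (I.mul_mem_right _ (δ^[k] y) hsum) using 1
  rw [sub_mul, smul_mul_assoc]
  abel

end Algebra

theorem iterate_apply_prod_ofFn_sub_qFactorial_smul_mem {F : Type*} [Field F] [Algebra F R]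
    {q : F} (hδ : IsSkewDerivation (σ : R →+* R) δ) (hσI : ∀ a ∈ I, σ a ∈ I)
    (hqskew : ∀ r, δ (σ r) = q • σ (δ r)) (n : ℕ) (a : Fin n → R) (ha : ∀ i, a i ∈ I) :
    δ^[n] (List.ofFn a).prod
        - qFactorial q n • (List.ofFn fun i : Fin n => σ^[n - 1 - i] (δ (a i))).prod ∈ I := by
  induction n with
  | zero => simp [qFactorial]
  | succ n ih =>
    set y := (List.ofFn fun i : Fin n => a i.succ).prod
    set P := (List.ofFn fun i : Fin n => σ^[n - 1 - i] (δ (a i.succ))).prod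
    have hprod : (List.ofFn a).prod = a 0 * y := by rw [List.ofFn_succ, List.prod_cons]
    have hP : (List.ofFn fun i : Fin (n + 1) => σ^[n + 1 - 1 - i] (δ (a i))).prod
        = σ^[n] (δ (a 0)) * P := by
      simp [List.ofFn_succ, P, Nat.sub_sub, Nat.add_comm 1]
    have hy : ∀ j < n, δ^[j] y ∈ I := fun j hj =>
      hδ.iterate_apply_list_prod_mem hσI _ (List.forall_mem_ofFn_iff.2 fun i => ha i.succ)
        (by simpa using hj)
    have hfac : qFactorial q (n + 1) = (∑ i ∈ range (n + 1), q ^ i) * qFactorial q n := by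
      rw [qFactorial, prod_range_succ, mul_comm]
      rfl
    rw [hprod, hP]
    convert add_mem (hδ.iterate_succ_apply_mul_sub_smul_mem hσI hqskew (ha 0) hy)
      (I.algebra_smul_mem (∑ i ∈ range (n + 1), q ^ i)
        (I.mul_mem_left (σ^[n] (δ (a 0))) _ (ih (fun i => a i.succ) fun i => ha i.succ))) using 1
    rw [hfac, mul_sub, smul_sub, mul_smul_comm, smul_smul]
    abel

end RingEquiv

end IsSkewDerivation

theorem stmt16_general {F : Type*} [Field F] {R : Type*} [Ring R] [Algebra F R]
    (σ : R ≃+* R) (δ : R →+ R) (hδ : IsSkewDerivation (σ : R →+* R) δ)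
    (q : F) (hqskew : ∀ r : R, δ (σ r) = q • σ (δ r))
    (I : TwoSidedIdeal R) (hσI : ∀ a ∈ I, σ a ∈ I)
    (n : ℕ) (a : Fin n → R) (ha : ∀ i, a i ∈ I) :
    ∃ w ∈ I, (⇑δ)^[n] ((List.ofFn a).prod) =
      qFactorial q n •
        (List.ofFn fun i : Fin n => (⇑σ)^[n - 1 - (i : ℕ)] (δ (a i))).prod + w :=
  ⟨_, hδ.iterate_apply_prod_ofFn_sub_qFactorial_smul_mem hσI hqskew n a ha,
    (add_sub_cancel _ _).symm⟩

/-- the `q`-Leibniz formula for a `q`-skew `σ`-derivation on a `σ`-stable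
ideal `I`: for `a₁, …, aₙ ∈ I`,
`δⁿ(a₁⋯aₙ) = (n!)_q · σ^{n-1}δ(a₁) σ^{n-2}δ(a₂) ⋯ δ(aₙ) + w` with `w ∈ I`. -/
theorem stmt16 {F : Type*} [Field F] {R : Type*} [Ring R] [Algebra F R]
    (σ : R ≃+* R) (δ : R →+ R) (hδ : IsSkewDerivation (σ : R →+* R) δ)
    (q : F) (hq : q ≠ 0) (hqskew : ∀ r : R, δ (σ r) = q • σ (δ r))
    (I : TwoSidedIdeal R) (hσI : ∀ a ∈ I, σ a ∈ I)
    (n : ℕ) (a : Fin n → R) (ha : ∀ i, a i ∈ I) :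
    ∃ w ∈ I, (⇑δ)^[n] ((List.ofFn a).prod) =
      qFactorial q n •
        (List.ofFn fun i : Fin n => (⇑σ)^[n - 1 - (i : ℕ)] (δ (a i))).prod + w :=
  stmt16_general σ δ hδ q hqskew I hσI n a ha
end

section
/- Let R be an F-algebra, δ a q-skew σ-derivation (δσ = qσδ, q ∈ F nonzero, σ an automorphism), and I a σ-stable ideal with Iⁿ = 0. If (n!)_q ≠ 0 in F, then δ(a) is nilpotent for every a ∈ I; specifically (δ(a))^{n²} = 0. -/
/-!
Expand `δⁿ` of a product of `n` elements of `I` by the skew Leibniz rule. A term in which some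
factor receives no `δ` lies in `I`, so modulo `I` only the terms in which every factor receives
exactly one `δ` survive. Moving `δ` past powers of `σ` produces the twisted powers
`u σ(u) ⋯ σ^{s-1}(u)` of `u = algebraMap F R q`, and modulo `I` these act like `uˢ` on the elements
`σᴹ(δ a)`, because `δ(c r) = δ(r c)` for central `c` forces `(σ c - c) δ(r) ∈ I` for `r ∈ I`.
For the factors `σ a, σ² a, …, σⁿ a` the surviving terms add up to `q^e (n!)_q (σⁿ(δ a))ⁿ`. That
product of `n` elements of `I` vanishes and `q^e (n!)_q` is invertible, so `(σⁿ(δ a))ⁿ ∈ I`, hence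
`σⁿ(δ a ^ n²) = 0`, and `σ` is injective.
-/

open Finset Function

lemma qFactorial_succ {F : Type*} [Field F] (q : F) (n : ℕ) :
    qFactorial q (n + 1) = qFactorial q n * ∑ k ∈ range (n + 1), q ^ k :=
  prod_range_succ _ n

section

variable {R : Type*} [Ring R]

lemma RingHom.pow_apply_pow_apply (σ : R →+* R) (k l : ℕ) (x : R) :
    (σ ^ k) ((σ ^ l) x) = (σ ^ (k + l)) x := by
  rw [pow_add]; rfl

lemma RingHom.map_mem_center_of_surjective {S : Type*} [Ring S] {f : R →+* S}
    (hf : Surjective f) {c : R} (hc : c ∈ Set.center R) : f c ∈ Set.center S := by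
  rw [Semigroup.mem_center_iff] at hc ⊢
  intro g
  obtain ⟨r, rfl⟩ := hf g
  rw [← map_mul, ← map_mul, hc]

lemma TwoSidedIdeal.pow_apply_mem {I : TwoSidedIdeal R} {σ : R →+* R} (hσI : ∀ a ∈ I, σ a ∈ I)
    (k : ℕ) {a : R} (ha : a ∈ I) : (σ ^ k) a ∈ I := by
  induction k with
  | zero => exact ha
  | succ k ih => rw [pow_succ', RingHom.coe_mul, comp_apply]; exact hσI _ ih

lemma TwoSidedIdeal.ringCon_mk'_eq_iff (I : TwoSidedIdeal R) {a b : R} :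
    I.ringCon.mk' a = I.ringCon.mk' b ↔ a - b ∈ I :=
  (RingCon.eq _).trans (I.rel_iff a b)

def iterateSpan (δ : R →+ R) (y : R) (k : ℕ) : Ideal R :=
  Ideal.span ((fun j => δ^[j] y) '' Set.Iio k)

lemma iterate_mem_iterateSpan (δ : R →+ R) (y : R) {j k : ℕ} (hj : j < k) :
    δ^[j] y ∈ iterateSpan δ y k :=
  Ideal.subset_span ⟨j, hj, rfl⟩

lemma iterateSpan_mono (δ : R →+ R) (y : R) {k l : ℕ} (h : k ≤ l) :
    iterateSpan δ y k ≤ iterateSpan δ y l :=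
  Ideal.span_mono (Set.image_mono (Set.Iio_subset_Iio h))

def leibnizCoeff (σ : R →+* R) (δ : R →+ R) (k : ℕ) (x : R) : R :=
  ∑ p ∈ antidiagonal k, (σ ^ p.2) (δ ((σ ^ p.1) x))

section Leibniz

variable {σ : R →+* R} {δ : R →+ R}

lemma leibnizCoeff_zero (x : R) : leibnizCoeff σ δ 0 x = δ x := by
  simp [leibnizCoeff]

lemma leibnizCoeff_succ (k : ℕ) (x : R) :
    leibnizCoeff σ δ (k + 1) x = δ ((σ ^ (k + 1)) x) + σ (leibnizCoeff σ δ k x) := by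
  simp only [leibnizCoeff, Nat.sum_antidiagonal_succ', pow_zero, RingHom.coe_one, id_eq, map_sum,
    pow_succ', RingHom.coe_mul, comp_apply]

namespace IsSkewDerivation

variable {I : TwoSidedIdeal R}

lemma map_mem_iterateSpan_succ (hδ : IsSkewDerivation σ δ) {y r : R} {k : ℕ}
    (hr : r ∈ iterateSpan δ y k) : δ r ∈ iterateSpan δ y (k + 1) := by
  induction hr using Submodule.span_induction with
  | mem r hr =>
    obtain ⟨j, hj, rfl⟩ := hr
    rw [← iterate_succ_apply' δ]
    exact iterate_mem_iterateSpan δ y (Nat.succ_lt_succ hj)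
  | zero => simp
  | add r s _ _ hr hs => simpa using add_mem hr hs
  | smul c r hr₀ hr =>
    rw [smul_eq_mul, hδ]
    exact add_mem (Ideal.mul_mem_left _ _ (iterateSpan_mono δ y k.le_succ hr₀))
      (Ideal.mul_mem_left _ _ hr)

lemma iterate_mul_sub_mem_iterateSpan (hδ : IsSkewDerivation σ δ) (k : ℕ) (x y : R) :
    δ^[k + 1] (x * y) - (σ ^ (k + 1)) x * δ^[k + 1] y - leibnizCoeff σ δ k x * δ^[k] y
      ∈ iterateSpan δ y k := by
  induction k with
  | zero => simp [leibnizCoeff_zero, hδ x y]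
  | succ k ih =>
    obtain ⟨w, hw, hxy⟩ : ∃ w ∈ iterateSpan δ y k,
        δ^[k + 1] (x * y) = (σ ^ (k + 1)) x * δ^[k + 1] y + leibnizCoeff σ δ k x * δ^[k] y + w :=
      ⟨_, ih, by abel⟩
    have hlow : δ (leibnizCoeff σ δ k x) * δ^[k] y ∈ iterateSpan δ y (k + 1) :=
      Ideal.mul_mem_left _ _ (iterate_mem_iterateSpan δ y k.lt_succ_self)
    convert add_mem hlow (hδ.map_mem_iterateSpan_succ hw) using 1
    rw [iterate_succ_apply' δ (k + 1), hxy, iterate_succ_apply' δ (k + 1), iterate_succ_apply' δ k,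
      pow_succ' σ (k + 1), RingHom.coe_mul, comp_apply, map_add, map_add, hδ, hδ,
      leibnizCoeff_succ, add_mul]
    abel

lemma iterate_succ_mul_sub_mem (hδ : IsSkewDerivation σ δ) (hσI : ∀ a ∈ I, σ a ∈ I)
    {b v : R} {k : ℕ} (hb : b ∈ I) (hv : ∀ j < k, δ^[j] v ∈ I) :
    δ^[k + 1] (b * v) - leibnizCoeff σ δ k b * δ^[k] v ∈ I := by
  have hspan : iterateSpan δ v k ≤ I.asIdeal :=
    Ideal.span_le.2 <| by rintro _ ⟨j, hj, rfl⟩; exact hv j hj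
  have hw := TwoSidedIdeal.mem_asIdeal.1 (hspan (hδ.iterate_mul_sub_mem_iterateSpan k b v))
  convert I.add_mem hw (I.mul_mem_right _ (δ^[k + 1] v) (I.pow_apply_mem hσI (k + 1) hb)) using 1
  abel

lemma iterate_list_prod_mem (hδ : IsSkewDerivation σ δ) (hσI : ∀ a ∈ I, σ a ∈ I)
    {L : List R} (hL : ∀ r ∈ L, r ∈ I) {k : ℕ} (hk : k < L.length) : δ^[k] L.prod ∈ I := by
  induction L generalizing k with
  | nil => simp at hk
  | cons b L ih =>
    rw [List.forall_mem_cons] at hL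
    rw [List.length_cons] at hk
    rw [List.prod_cons]
    cases k with
    | zero => exact I.mul_mem_right _ _ hL.1
    | succ k =>
      have hv : ∀ j < k, δ^[j] L.prod ∈ I := fun j hj => ih hL.2 (show j < L.length by omega)
      simpa using I.add_mem (hδ.iterate_succ_mul_sub_mem hσI hL.1 hv)
        (I.mul_mem_left (leibnizCoeff σ δ k b) _ (ih hL.2 (show k < L.length by omega)))

lemma sub_mul_mem_of_mem_center (hδ : IsSkewDerivation σ δ) (hσI : ∀ a ∈ I, σ a ∈ I)
    {c r : R} (hc : c ∈ Set.center R) (hr : r ∈ I) : (σ c - c) * δ r ∈ I := by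
  rw [Semigroup.mem_center_iff] at hc
  have key : δ c * r + σ c * δ r = c * δ r + σ r * δ c := by
    rw [← hδ, ← hc r, hδ, hc (δ r)]
  have : (σ c - c) * δ r = σ r * δ c - δ c * r := by
    rw [sub_mul, sub_eq_sub_iff_add_eq_add, add_comm, key, add_comm]
  rw [this]
  exact I.sub_mem (I.mul_mem_right _ _ (hσI r hr)) (I.mul_mem_left _ _ hr)

lemma pow_apply_sub_mul_mem (hδ : IsSkewDerivation σ δ) (hσ : Surjective σ)
    (hσI : ∀ a ∈ I, σ a ∈ I) {c r : R} (hc : c ∈ Set.center R) (hr : r ∈ I) (p : ℕ) :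
    ((σ ^ p) c - c) * δ r ∈ I := by
  induction p with
  | zero => simp
  | succ p ih =>
    have hcp : (σ ^ p) c ∈ Set.center R :=
      RingHom.map_mem_center_of_surjective (by rw [RingHom.coe_pow]; exact hσ.iterate p) hc
    rw [pow_succ', RingHom.coe_mul, comp_apply, ← sub_add_sub_cancel _ ((σ ^ p) c), add_mul]
    exact I.add_mem (hδ.sub_mul_mem_of_mem_center hσI hcp hr) ih

end IsSkewDerivation

end Leibniz

def twistedPow (σ : R →+* R) (u : R) : ℕ → R
  | 0 => 1
  | s + 1 => u * σ (twistedPow σ u s)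

section twistedPow

variable {σ : R →+* R} {u : R}

lemma twistedPow_mem_center (hσ : Surjective σ) (hu : u ∈ Set.center R) (s : ℕ) :
    twistedPow σ u s ∈ Set.center R := by
  induction s with
  | zero => exact Set.one_mem_center
  | succ s ih => exact Set.mul_mem_center hu (RingHom.map_mem_center_of_surjective hσ ih)

lemma isUnit_twistedPow (hu : IsUnit u) (s : ℕ) : IsUnit (twistedPow σ u s) := by
  induction s with
  | zero => exact isUnit_one
  | succ s ih => exact hu.mul (ih.map σ)

lemma twistedPow_sub_pow_mul_mem {I : TwoSidedIdeal R} (hu : u ∈ Set.center R) {y : R}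
    (hy : ∀ p, ((σ ^ p) u - u) * y ∈ I) (p s : ℕ) :
    ((σ ^ p) (twistedPow σ u s) - u ^ s) * y ∈ I := by
  induction s generalizing p with
  | zero => simp [twistedPow]
  | succ s ih =>
    have hcomm : u ^ s * ((σ ^ p) u - u) = ((σ ^ p) u - u) * u ^ s :=
      Commute.pow_left (Semigroup.mem_center_iff.1 hu _).symm s
    have split : ((σ ^ p) (twistedPow σ u (s + 1)) - u ^ (s + 1)) * y
        = (σ ^ p) u * (((σ ^ (p + 1)) (twistedPow σ u s) - u ^ s) * y)
          + u ^ s * (((σ ^ p) u - u) * y) := by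
      rw [twistedPow, map_mul, pow_succ' u, ← RingHom.pow_apply_pow_apply σ p 1, pow_one,
        ← mul_assoc (u ^ s), hcomm]
      noncomm_ring
    rw [split]
    exact I.add_mem (I.mul_mem_left _ _ (ih (p + 1))) (I.mul_mem_left _ _ (hy p))

lemma apply_pow_apply_eq_twistedPow_mul {F : Type*} [CommSemiring F] [Algebra F R] {δ : R →+ R}
    {q : F} (hqskew : ∀ r : R, δ (σ r) = q • σ (δ r)) (s : ℕ) (r : R) :
    δ ((σ ^ s) r) = twistedPow σ (algebraMap F R q) s * (σ ^ s) (δ r) := by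
  induction s generalizing r with
  | zero => simp [twistedPow]
  | succ s ih =>
    rw [pow_succ', RingHom.coe_mul, comp_apply, hqskew, ih, Algebra.smul_def, map_mul, twistedPow,
      mul_assoc]
    rfl

end twistedPow

section qSkew

variable {F : Type*} [Field F] [Algebra F R] {σ : R →+* R} {δ : R →+ R} {q : F}
  {I : TwoSidedIdeal R}

lemma pow_apply_sub_mul_pow_apply_mem (hδ : IsSkewDerivation σ δ) (hσ : Surjective σ)
    (hσI : ∀ a ∈ I, σ a ∈ I) (hq : q ≠ 0) (hqskew : ∀ r : R, δ (σ r) = q • σ (δ r))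
    {a : R} (ha : a ∈ I) (p M : ℕ) :
    ((σ ^ p) (algebraMap F R q) - algebraMap F R q) * (σ ^ M) (δ a) ∈ I := by
  have hZ := twistedPow_mem_center hσ (Set.algebraMap_mem_center q) M
  have h := hδ.pow_apply_sub_mul_mem hσ hσI (Set.algebraMap_mem_center q)
    (I.pow_apply_mem hσI M ha) p
  rw [apply_pow_apply_eq_twistedPow_mul hqskew, ← mul_assoc, Semigroup.mem_center_iff.1 hZ,
    mul_assoc] at h
  exact (Ideal.unit_mul_mem_iff_mem I.asIdeal (isUnit_twistedPow ((Ne.isUnit hq).map _) M)).1 h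

lemma mk'_leibnizCoeff_pow_apply (hδ : IsSkewDerivation σ δ) (hσ : Surjective σ)
    (hσI : ∀ a ∈ I, σ a ∈ I) (hq : q ≠ 0) (hqskew : ∀ r : R, δ (σ r) = q • σ (δ r))
    {a : R} (ha : a ∈ I) (m N : ℕ) :
    I.ringCon.mk' (leibnizCoeff σ δ m ((σ ^ N) a)) =
      algebraMap F I.ringCon.Quotient (q ^ N * ∑ k ∈ range (m + 1), q ^ k) *
        I.ringCon.mk' ((σ ^ (N + m)) (δ a)) := by
  have hterm : ∀ p ∈ antidiagonal m,
      I.ringCon.mk' ((σ ^ p.2) (δ ((σ ^ p.1) ((σ ^ N) a)))) =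
        algebraMap F _ (q ^ (p.1 + N)) * I.ringCon.mk' ((σ ^ (N + m)) (δ a)) := by
    intro p hp
    rw [HasAntidiagonal.mem_antidiagonal] at hp
    have h := twistedPow_sub_pow_mul_mem (Set.algebraMap_mem_center q)
      (pow_apply_sub_mul_pow_apply_mem hδ hσ hσI hq hqskew ha · (N + m)) p.2 (p.1 + N)
    rw [sub_mul, ← I.ringCon_mk'_eq_iff, map_mul, map_mul, map_pow] at h
    rw [RingHom.pow_apply_pow_apply, apply_pow_apply_eq_twistedPow_mul hqskew, map_mul,
      RingHom.pow_apply_pow_apply, show p.2 + (p.1 + N) = N + m by omega, map_mul, h, map_pow]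
    rfl
  rw [leibnizCoeff, map_sum, sum_congr rfl hterm, ← sum_mul, ← map_sum,
    Nat.sum_antidiagonal_eq_sum_range_succ (fun i _ => q ^ (i + N)), mul_sum]
  simp only [pow_add, mul_comm]

/-- The factors are twisted by successive powers of `σ` so that, modulo `I`, every `δ` lands on
the same element `σ^(c + m) (δ a)`. -/
lemma mk'_iterate_prod_pow_apply (hδ : IsSkewDerivation σ δ) (hσ : Surjective σ)
    (hσI : ∀ a ∈ I, σ a ∈ I) (hq : q ≠ 0) (hqskew : ∀ r : R, δ (σ r) = q • σ (δ r))
    {a : R} (ha : a ∈ I) (m c : ℕ) : ∃ e : ℕ,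
    I.ringCon.mk' (δ^[m] (List.ofFn fun i : Fin m => (σ ^ (c + i + 1)) a).prod) =
      algebraMap F I.ringCon.Quotient (q ^ e * qFactorial q m) *
        I.ringCon.mk' ((σ ^ (c + m)) (δ a)) ^ m := by
  induction m generalizing c with
  | zero => exact ⟨0, by simp [qFactorial]⟩
  | succ m ih =>
    obtain ⟨e, he⟩ := ih (c + 1)
    set v := (List.ofFn fun i : Fin m => (σ ^ (c + 1 + i + 1)) a).prod
    have hprod : (List.ofFn fun i : Fin (m + 1) => (σ ^ (c + i + 1)) a).prod =
        (σ ^ (c + 1)) a * v := by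
      have hexp (i : ℕ) : c + (i + 1) + 1 = c + 1 + i + 1 := by omega
      simp only [List.ofFn_succ, List.prod_cons, Fin.val_zero, Fin.val_succ, add_zero, hexp, v]
    have hv : ∀ j < m, δ^[j] v ∈ I := fun j hj =>
      hδ.iterate_list_prod_mem hσI (List.forall_mem_ofFn_iff.2 fun i => I.pow_apply_mem hσI _ ha)
        (by simpa using hj)
    have hstep := hδ.iterate_succ_mul_sub_mem hσI (I.pow_apply_mem hσI (c + 1) ha) hv
    rw [← I.ringCon_mk'_eq_iff] at hstep
    refine ⟨c + 1 + e, ?_⟩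
    rw [hprod, hstep, map_mul, he, mk'_leibnizCoeff_pow_apply hδ hσ hσI hq hqskew ha,
      show c + 1 + m = c + (m + 1) by omega, qFactorial_succ, mul_assoc,
      ← mul_assoc (I.ringCon.mk' _), ← Algebra.commutes, mul_assoc,
      ← mul_assoc (algebraMap F _ _), ← map_mul, ← pow_succ']
    congr 2
    ring

end qSkew

end

theorem stmt17_general {F : Type*} [Field F] {R : Type*} [Ring R] [Algebra F R]
    (σ : R ≃+* R) (δ : R →+ R) (hδ : IsSkewDerivation (σ : R →+* R) δ)
    (q : F) (hq : q ≠ 0) (hqskew : ∀ r : R, δ (σ r) = q • σ (δ r))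
    (I : TwoSidedIdeal R) (hσI : ∀ a ∈ I, σ a ∈ I)
    (n : ℕ)
    (hInil : ∀ a : Fin n → R, (∀ i, a i ∈ I) → (List.ofFn a).prod = 0)
    (hqfac : qFactorial q n ≠ 0) :
    ∀ a ∈ I, δ a ^ (n ^ 2) = 0 := by
  intro a ha
  obtain ⟨e, he⟩ := mk'_iterate_prod_pow_apply hδ σ.surjective hσI hq hqskew ha n 0
  have hunit : IsUnit (algebraMap F I.ringCon.Quotient (q ^ e * qFactorial q n)) :=
    (Ne.isUnit (mul_ne_zero (pow_ne_zero e hq) hqfac)).map _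
  have hpow : ((σ : R →+* R) ^ n) (δ a) ^ n ∈ I := by
    rwa [hInil _ fun i => I.pow_apply_mem hσI _ ha, iterate_map_zero, map_zero, ← map_pow,
      eq_comm, hunit.mul_right_eq_zero, ← map_zero I.ringCon.mk', I.ringCon_mk'_eq_iff, sub_zero,
      zero_add] at he
  have h0 := hInil (fun _ => ((σ : R →+* R) ^ n) (δ a) ^ n) fun _ => hpow
  rw [List.ofFn_const, List.prod_replicate, ← pow_mul, ← sq, ← map_pow] at h0
  exact (map_eq_zero_iff _ (by rw [RingHom.coe_pow]; exact σ.injective.iterate n)).1 h0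

/-- if `δ` is a `q`-skew `σ`-derivation, `I` a `σ`-stable ideal with
`Iⁿ = 0`, and `(n!)_q ≠ 0` in `F`, then `δ(a)` is nilpotent for every `a ∈ I`;
specifically `(δ(a))^{n²} = 0`. -/
theorem stmt17 {F : Type*} [Field F] {R : Type*} [Ring R] [Algebra F R]
    (σ : R ≃+* R) (δ : R →+ R) (hδ : IsSkewDerivation (σ : R →+* R) δ)
    (q : F) (hq : q ≠ 0) (hqskew : ∀ r : R, δ (σ r) = q • σ (δ r))
    (I : TwoSidedIdeal R) (hσI : ∀ a ∈ I, σ a ∈ I)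
    (n : ℕ) (hn : 0 < n)
    (hInil : ∀ a : Fin n → R, (∀ i, a i ∈ I) → (List.ofFn a).prod = 0)
    (hqfac : qFactorial q n ≠ 0) :
    ∀ a ∈ I, δ a ^ (n ^ 2) = 0 :=
  stmt17_general σ δ hδ q hq hqskew I hσI n hInil hqfac
end

section
/- Let R be an algebra over a field of characteristic zero and δ a derivation of R. Then the nil radical N(R) is stable under δ: δ(N(R)) ⊆ N(R). -/
/-- The nil radical of `R` as a set: the union of all nil two-sided ideals
(this is the largest nil ideal). -/
def nilRadicalSet (R : Type*) [Ring R] : Set R :=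
  {a | ∃ J : TwoSidedIdeal R, (∀ b ∈ J, IsNilpotent b) ∧ a ∈ J}

/-!
If `J` is a nil ideal, then so is `J + δ J`, which contains `δ J`. For `c ∈ J`, the Leibniz
expansion of `δⁿ (cⁿ)` has every term in `J` except `n! (δ c)ⁿ`; so if `cⁿ = 0` then
`n! (δ c)ⁿ ∈ J`, and in characteristic zero `(δ c)ⁿ ∈ J`. Hence every `b + δ c` with `b, c ∈ J`
has a power in `J`, and is therefore nilpotent.
-/

open Finset

theorem iterate_map_mul_eq_sum_antidiagonal {R : Type*} [NonUnitalNonAssocSemiring R]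
    (δ : R →+ R) (hδ : ∀ a b : R, δ (a * b) = δ a * b + a * δ b) (n : ℕ) (a b : R) :
    δ^[n] (a * b) = ∑ ij ∈ antidiagonal n, n.choose ij.1 • (δ^[ij.1] a * δ^[ij.2] b) := by
  induction n with
  | zero => simp
  | succ n ih =>
    rw [sum_antidiagonal_choose_succ_nsmul (fun i j ↦ δ^[i] a * δ^[j] b) n]
    simp only [Function.iterate_succ_apply', ih, map_sum, map_nsmul, hδ, smul_add,
      sum_add_distrib]
    rw [add_comm]
    congr 1
    refine sum_congr rfl fun ⟨i, j⟩ hij ↦ ?_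
    rw [n.choose_symm_of_eq_add (mem_antidiagonal.1 hij).symm]

section

variable {R : Type*} [Ring R] {δ : R →+ R} (J : TwoSidedIdeal R) {a : R}
  (hδ : ∀ a b : R, δ (a * b) = δ a * b + a * δ b)
include hδ

theorem iterate_map_pow_mem (ha : a ∈ J) {k m : ℕ} (hk : k < m) : δ^[k] (a ^ m) ∈ J := by
  induction m generalizing k with
  | zero => omega
  | succ m ih =>
    rw [pow_succ', iterate_map_mul_eq_sum_antidiagonal δ hδ]
    refine J.finsetSum_mem _ _ fun ⟨i, j⟩ hij ↦ J.nsmul_mem _ ?_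
    rw [HasAntidiagonal.mem_antidiagonal] at hij
    rcases Nat.lt_or_ge j m with hj | hj
    · exact J.mul_mem_left _ _ (ih hj)
    · obtain rfl : i = 0 := by omega
      exact J.mul_mem_right _ _ ha

theorem iterate_map_pow_self_sub_mem (ha : a ∈ J) (m : ℕ) :
    δ^[m] (a ^ m) - m.factorial • δ a ^ m ∈ J := by
  induction m with
  | zero => simp
  | succ m ih =>
    have h1m : (1, m) ∈ antidiagonal (m + 1) := mem_antidiagonal.2 (add_comm 1 m)
    rw [pow_succ', iterate_map_mul_eq_sum_antidiagonal δ hδ, ← add_sum_erase _ _ h1m,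
      add_sub_right_comm]
    have hlead : (m + 1).choose 1 • (δ^[1] a * δ^[m] (a ^ m)) - (m + 1).factorial • δ a ^ (m + 1) =
        (m + 1) • (δ a * (δ^[m] (a ^ m) - m.factorial • δ a ^ m)) := by
      rw [Nat.choose_one_right, Nat.factorial_succ, mul_sub, mul_smul_comm, ← pow_succ',
        smul_sub, mul_nsmul', Function.iterate_one]
    refine J.add_mem (hlead ▸ J.nsmul_mem _ (J.mul_mem_left _ _ ih)) ?_
    refine J.finsetSum_mem _ _ fun ⟨i, j⟩ hij ↦ J.nsmul_mem _ ?_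
    obtain ⟨hne, hij⟩ := mem_erase.1 hij
    rw [HasAntidiagonal.mem_antidiagonal] at hij
    rcases Nat.lt_or_ge j m with hj | hj
    · exact J.mul_mem_left _ _ (iterate_map_pow_mem J hδ ha hj)
    · obtain rfl : i = 0 := by
        by_contra
        exact hne (Prod.ext (by omega) (by simp only; omega))
      exact J.mul_mem_right _ _ ha

end

namespace TwoSidedIdeal

variable {R : Type*} [Ring R] (J : TwoSidedIdeal R)

theorem mem_of_nsmul_mem (F : Type*) [Field F] [CharZero F] [Algebra F R] {n : ℕ} (hn : n ≠ 0)
    {x : R} (h : n • x ∈ J) : x ∈ J := by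
  have hunit : algebraMap F R (n : F)⁻¹ * (n : R) = 1 := by
    rw [← map_natCast (algebraMap F R), ← map_mul, inv_mul_cancel₀ (Nat.cast_ne_zero.2 hn),
      map_one]
  simpa [nsmul_eq_mul, ← mul_assoc, hunit] using J.mul_mem_left (algebraMap F R (n : F)⁻¹) _ h

theorem pow_add_sub_pow_mem {b : R} (hb : b ∈ J) (y : R) (n : ℕ) :
    (b + y) ^ n - y ^ n ∈ J :=
  (J.rel_iff _ _).1 <| J.ringCon.toCon.pow n <| (J.rel_iff _ _).2 <| by rwa [add_sub_cancel_right]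

def addDerivImage (δ : R →+ R) (hδ : ∀ a b : R, δ (a * b) = δ a * b + a * δ b) :
    TwoSidedIdeal R :=
  .mk' {x | ∃ b ∈ J, ∃ c ∈ J, b + δ c = x}
    ⟨0, J.zero_mem, 0, J.zero_mem, by simp⟩
    (by
      rintro _ _ ⟨b, hb, c, hc, rfl⟩ ⟨b', hb', c', hc', rfl⟩
      exact ⟨b + b', J.add_mem hb hb', c + c', J.add_mem hc hc', by rw [map_add]; abel⟩)
    (by
      rintro _ ⟨b, hb, c, hc, rfl⟩
      exact ⟨-b, J.neg_mem hb, -c, J.neg_mem hc, by rw [map_neg]; abel⟩)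
    (by
      rintro x _ ⟨b, hb, c, hc, rfl⟩
      refine ⟨x * b - δ x * c, J.sub_mem (J.mul_mem_left _ _ hb) (J.mul_mem_left _ _ hc), x * c,
        J.mul_mem_left _ _ hc, ?_⟩
      rw [hδ, mul_add]; abel)
    (by
      rintro _ y ⟨b, hb, c, hc, rfl⟩
      refine ⟨b * y - c * δ y, J.sub_mem (J.mul_mem_right _ _ hb) (J.mul_mem_right _ _ hc), c * y,
        J.mul_mem_right _ _ hc, ?_⟩
      rw [hδ, add_mul]; abel)

variable {δ : R →+ R} (hδ : ∀ a b : R, δ (a * b) = δ a * b + a * δ b)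
include hδ

theorem mem_addDerivImage {x : R} : x ∈ J.addDerivImage δ hδ ↔ ∃ b ∈ J, ∃ c ∈ J, b + δ c = x :=
  mem_mk' ..

theorem map_mem_addDerivImage {a : R} (ha : a ∈ J) : δ a ∈ J.addDerivImage δ hδ :=
  (J.mem_addDerivImage hδ).2 ⟨0, J.zero_mem, a, ha, zero_add _⟩

theorem exists_pow_map_mem (F : Type*) [Field F] [CharZero F] [Algebra F R] {c : R} (hc : c ∈ J)
    (hnil : IsNilpotent c) : ∃ n, δ c ^ n ∈ J := by
  obtain ⟨n, hn⟩ := hnil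
  have h := iterate_map_pow_self_sub_mem J hδ hc n
  rw [hn, Function.iterate_fixed (map_zero δ), zero_sub, neg_mem_iff] at h
  exact ⟨n, J.mem_of_nsmul_mem F n.factorial_ne_zero h⟩

theorem isNilpotent_of_mem_addDerivImage (F : Type*) [Field F] [CharZero F] [Algebra F R]
    (hJ : ∀ x ∈ J, IsNilpotent x) {x : R} (hx : x ∈ J.addDerivImage δ hδ) : IsNilpotent x := by
  obtain ⟨b, hb, c, hc, rfl⟩ := (J.mem_addDerivImage hδ).1 hx
  obtain ⟨n, hn⟩ := J.exists_pow_map_mem hδ F hc (hJ c hc)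
  have hpow : (b + δ c) ^ n ∈ J := by
    simpa using J.add_mem (J.pow_add_sub_pow_mem hb (δ c) n) hn
  exact (hJ _ hpow).of_pow

end TwoSidedIdeal

/-- if `R` is an algebra over a field of characteristic zero and `δ` a
derivation of `R`, then the nil radical is `δ`-stable. -/
theorem stmt18 {F : Type*} [Field F] [CharZero F] {R : Type*} [Ring R] [Algebra F R]
    (δ : R →+ R) (hδ : ∀ a b : R, δ (a * b) = δ a * b + a * δ b) :
    ∀ a ∈ nilRadicalSet R, δ a ∈ nilRadicalSet R := by
  rintro a ⟨J, hJ, ha⟩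
  exact ⟨J.addDerivImage δ hδ, fun _ ↦ J.isNilpotent_of_mem_addDerivImage hδ F hJ,
    J.map_mem_addDerivImage hδ ha⟩
end
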